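/- arXiv:2405.15759 — 2 statements merged into one kernel-verified Lean document; each statement's English description precedes it below -/
import Mathlib

section
/- Let ρ be a (κ,θ)-RoCK multicore and let ξ be a removable ribbon of ρ lying in component r, corresponding to beta-numbers x < y with x ∉ Bʳ(ρ,κ), y ∈ Bʳ(ρ,κ), x̄ = θ_a, ȳ = θ_{b+1}, a ≤ b. Then the content of ξ is cont(ξ) = α(x+1, y−x) = γ^θ_{[a,b]} + (⌊(y−x)/e⌋ − ⌊(1/e)Σ_{k=a}^{b}((θ_{k+1}−θ_k) mod e)⌋)·δ, and the δ-coefficient satisfies ⌊(y−x)/e⌋ ≤ hʳ_{θ_a,θ_{b+1}}(ρ,κ) − 1. Hence cont(ξ) = kδ + γ^θ_{[a,b]} with k < max_r hʳ,θ_{[a,b]}(ρ,κ). -/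
/-- The positive root `α(t,L)` of affine type `A_{e-1}^{(1)}`. -/
def alphaRoot (e : ℕ) (t : ℤ) (L : ℕ) : ZMod e → ℤ := fun j =>
  (((Finset.range L).filter (fun k : ℕ => ((t + (k : ℤ) : ℤ) : ZMod e) = j)).card : ℤ)

/-- The null root `δ`. -/
def deltaRoot (e : ℕ) : ZMod e → ℤ := fun _ => 1

/-- `γ^θ_t := α(θ_t + 1, (θ_{t+1} − θ_t) mod e)`. -/
def gammaTheta (e : ℕ) (θ : ℕ → ℕ) (t : ℕ) : ZMod e → ℤ :=
  alphaRoot e ((θ t : ℤ) + 1) ((θ (t + 1) + e - θ t) % e)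

/-- `γ^θ_{[a,b]} := γ^θ_a + ⋯ + γ^θ_b`. -/
def gammaInt (e : ℕ) (θ : ℕ → ℕ) (a b : ℕ) : ZMod e → ℤ :=
  ∑ t ∈ Finset.Icc a b, gammaTheta e θ t

/-- A partition, encoded as a weakly decreasing eventually-zero sequence of parts. -/
def IsPartitionFun (p : ℕ → ℕ) : Prop :=
  Antitone p ∧ ∃ N : ℕ, ∀ a : ℕ, N ≤ a → p a = 0

/-- The beta-number set of the partition `p` with charge `c`. -/
def betaSet (c : ℤ) (p : ℕ → ℕ) : Set ℤ :=
  {x | ∃ a : ℕ, x = c + (p a : ℤ) - ((a : ℤ) + 1)}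

/-- `Mmax e B i`: the maximal element of `B` congruent to `i` mod `e`. -/
noncomputable def Mmax (e : ℕ) (B : Set ℤ) (i : ZMod e) : ℤ :=
  sSup {x ∈ B | (x : ZMod e) = i}

/-- `hIdx e B i j = ⌊(M_j − M_i)/e⌋`. -/
noncomputable def hIdx (e : ℕ) (B : Set ℤ) (i j : ZMod e) : ℤ :=
  (Mmax e B j - Mmax e B i).fdiv (e : ℤ)

section Aux

lemma alphaRoot_congr (e : ℕ) {t t' : ℤ} (h : (t : ZMod e) = (t' : ZMod e)) (L : ℕ) :
    alphaRoot e t L = alphaRoot e t' L := by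
  funext j
  unfold alphaRoot
  congr 2
  apply Finset.filter_congr
  intro k _
  constructor <;> intro hk <;> rw [← hk] <;> push_cast <;> rw [h]

lemma alphaRoot_succ (e : ℕ) (t : ℤ) (L : ℕ) (j : ZMod e) :
    alphaRoot e t (L + 1) j =
      alphaRoot e t L j + (if ((t + (L : ℤ) : ℤ) : ZMod e) = j then 1 else 0) := by
  unfold alphaRoot
  rw [Finset.range_add_one, Finset.filter_insert]
  split <;> simp [Finset.card_insert_of_notMem, Finset.notMem_range_self]

lemma alphaRoot_concat (e : ℕ) (t : ℤ) (L1 L2 : ℕ) :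
    alphaRoot e t (L1 + L2) = alphaRoot e t L1 + alphaRoot e (t + L1) L2 := by
  induction L2 with
  | zero => funext j; simp [alphaRoot]
  | succ n ih =>
    funext j
    have h1 := alphaRoot_succ e t (L1 + n) j
    have h2 := alphaRoot_succ e (t + L1) n j
    rw [← Nat.add_assoc] at *
    rw [h1, ih]
    simp only [Pi.add_apply] at *
    rw [h2]
    push_cast
    ring_nf

lemma alphaRoot_e (e : ℕ) (he : 1 < e) (t : ℤ) : alphaRoot e t e = deltaRoot e := by
  haveI : NeZero e := ⟨by omega⟩
  funext j
  unfold alphaRoot deltaRoot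
  have : (Finset.range e).filter (fun k : ℕ => ((t + (k : ℤ) : ℤ) : ZMod e) = j)
      = {(j - (t : ZMod e)).val} := by
    ext k
    simp only [Finset.mem_filter, Finset.mem_range, Finset.mem_singleton]
    constructor
    · rintro ⟨hk, hcast⟩
      have : ((k : ℕ) : ZMod e) = j - (t : ZMod e) := by
        push_cast at hcast; linear_combination hcast
      rw [← this, ZMod.val_natCast, Nat.mod_eq_of_lt hk]
    · rintro rfl
      refine ⟨ZMod.val_lt _, ?_⟩
      push_cast
      rw [ZMod.natCast_val, ZMod.cast_id]
      ring
  rw [this, Finset.card_singleton]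
  norm_num

lemma alphaRoot_add_e (e : ℕ) (he : 1 < e) (t : ℤ) (L : ℕ) :
    alphaRoot e t (L + e) = alphaRoot e t L + deltaRoot e := by
  rw [alphaRoot_concat, alphaRoot_e e he]

lemma alphaRoot_decomp (e : ℕ) (he : 1 < e) (t : ℤ) (L : ℕ) :
    alphaRoot e t L = alphaRoot e t (L % e) + ((L / e : ℕ) : ℤ) • deltaRoot e := by
  conv_lhs => rw [← Nat.mod_add_div L e]
  generalize L % e = m
  generalize L / e = q
  induction q with
  | zero => simp
  | succ n ih =>
    have : m + e * (n + 1) = (m + e * n) + e := by ring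
    rw [this, alphaRoot_add_e e he, ih]
    push_cast
    funext j
    simp [deltaRoot]
    ring

lemma w_cast (e : ℕ) (θ : ℕ → ℕ) (k : ℕ) (h : θ k < e) :
    (((θ (k + 1) + e - θ k) % e : ℕ) : ZMod e) = (θ (k+1) : ZMod e) - (θ k : ZMod e) := by
  rw [ZMod.natCast_mod]
  have h2 : θ k ≤ θ (k+1) + e := by omega
  push_cast [h2]
  simp [ZMod.natCast_self]

lemma gammaInt_eq (e : ℕ) (θ : ℕ → ℕ) (a : ℕ) :
    ∀ b, a ≤ b → (∀ k, a ≤ k → k ≤ b → θ k < e) →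
    gammaInt e θ a b = alphaRoot e ((θ a : ℤ) + 1) (∑ k ∈ Finset.Icc a b, (θ (k + 1) + e - θ k) % e)
    ∧ ((∑ k ∈ Finset.Icc a b, (θ (k + 1) + e - θ k) % e : ℕ) : ZMod e)
        = (θ (b+1) : ZMod e) - (θ a : ZMod e) := by
  intro b
  induction b with
  | zero => intro h hv; interval_cases a
            · constructor
              · simp [gammaInt, gammaTheta]
              · exact w_cast e θ 0 (hv 0 le_rfl le_rfl)
  | succ n ih =>
    intro h hv
    rcases Nat.lt_or_ge a (n+1) with h'|h'
    · obtain ⟨ih1, ih2⟩ := ih (by omega) (fun k hk1 hk2 => hv k hk1 (by omega))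
      have hsum : ∑ k ∈ Finset.Icc a (n+1), (θ (k + 1) + e - θ k) % e
          = (∑ k ∈ Finset.Icc a n, (θ (k + 1) + e - θ k) % e) + (θ (n+2) + e - θ (n+1)) % e := by
        rw [Finset.sum_Icc_succ_top (by omega)]
      constructor
      · rw [hsum, alphaRoot_concat]
        rw [gammaInt, Finset.sum_Icc_succ_top (by omega)]
        rw [← gammaInt, ih1, gammaTheta]
        congr 1
        apply alphaRoot_congr
        push_cast [-Nat.cast_sum]
        rw [ih2]
        ring
      · rw [hsum, Nat.cast_add, ih2, w_cast e θ (n+1) (hv (n+1) (by omega) le_rfl)]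
        ring
    · have : a = n+1 := by omega
      subst this
      constructor
      · simp [gammaInt, gammaTheta]
      · simpa using w_cast e θ (n+1) (hv (n+1) le_rfl le_rfl)

lemma Mmax_spec (e : ℕ) (he : 1 < e) (c : ℤ) (p : ℕ → ℕ) (hp : IsPartitionFun p) (i : ZMod e) :
    Mmax e (betaSet c p) i ∈ betaSet c p ∧ ((Mmax e (betaSet c p) i : ℤ) : ZMod e) = i ∧
      ∀ z ∈ betaSet c p, (z : ZMod e) = i → z ≤ Mmax e (betaSet c p) i := by
  haveI : NeZero e := ⟨by omega⟩
  obtain ⟨hmono, N, hN⟩ := hp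
  set S : Set ℤ := {x ∈ betaSet c p | (x : ZMod e) = i} with hS
  have hne : S.Nonempty := by
    set v : ℕ := ((c : ZMod e) - 1 - i).val with hv
    refine ⟨c - (N * e + v : ℕ) - 1, ⟨⟨N * e + v, ?_⟩, ?_⟩⟩
    · rw [hN (N * e + v) (by nlinarith [Nat.le_mul_of_pos_right N (show 0 < e by omega)])]
      push_cast; ring
    · push_cast
      have h1 : ((N * e + v : ℕ) : ZMod e) = (v : ZMod e) := by
        push_cast; simp [ZMod.natCast_self]
      have h2 : ((v : ℕ) : ZMod e) = (c : ZMod e) - 1 - i := by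
        rw [hv, ZMod.natCast_val, ZMod.cast_id]
      push_cast at h1
      rw [h1, h2]; ring
  have hbdd : BddAbove S := by
    refine ⟨c + (p 0 : ℤ), ?_⟩
    rintro z ⟨⟨m, rfl⟩, -⟩
    have := hmono (Nat.zero_le m)
    omega
  have hmem : Mmax e (betaSet c p) i ∈ S := Int.csSup_mem hne hbdd
  exact ⟨hmem.1, hmem.2, fun z hz hzi => le_csSup hbdd ⟨hz, hzi⟩⟩

lemma lower_bound (e : ℕ) (he : 1 < e) (B : Set ℤ) (hB : ∀ z ∈ B, z - (e : ℤ) ∈ B)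
    (M x : ℤ) (hM : M ∈ B) (hres : (M : ZMod e) = (x : ZMod e)) (hx : x ∉ B) :
    M + (e : ℤ) ≤ x := by
  have hdvd : (e : ℤ) ∣ M - x := by
    rw [← ZMod.intCast_zmod_eq_zero_iff_dvd]
    push_cast
    rw [hres]; ring
  rcases lt_or_ge M x with h | h
  · have hdvd' : (e : ℤ) ∣ x - M := by
      have := dvd_neg.mpr hdvd
      rwa [neg_sub] at this
    have := Int.le_of_dvd (by omega) hdvd'
    omega
  · exfalso
    have key : ∀ k : ℕ, M - (e : ℤ) * k ∈ B := by
      intro k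
      induction k with
      | zero => simpa using hM
      | succ n ih =>
        have := hB _ ih
        have heq : M - (e:ℤ) * ((n+1 : ℕ) : ℤ) = M - (e:ℤ)*(n:ℕ) - e := by push_cast; ring
        rw [heq]; exact this
    obtain ⟨d, hd⟩ := hdvd
    have hd0 : 0 ≤ d := by nlinarith [show (0:ℤ) < e by omega]
    have := key d.toNat
    rw [Int.toNat_of_nonneg hd0] at this
    have : x ∈ B := by
      have heq : M - (e:ℤ) * d = x := by omega
      rwa [heq] at this
    exact hx this

lemma tele_sum (f : ℕ → ℤ) (a : ℕ) : ∀ b, a ≤ b →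
    ∑ t ∈ Finset.Icc a b, (f (t+1) - f t) = f (b+1) - f a := by
  intro b
  induction b with
  | zero => intro h; interval_cases a; simp
  | succ n ih =>
    intro h
    rcases Nat.lt_or_ge a (n+1) with h'|h'
    · rw [Finset.sum_Icc_succ_top (by omega), ih (by omega)]; ring
    · have : a = n+1 := by omega
      subst this; simp

end Aux

/-- Content of a removable ribbon of a `(κ,θ)`-RoCK multicore: with beta numbers
`x < y`, `x ∉ Bʳ`, `y ∈ Bʳ`, `x̄ = θ_a`, `ȳ = θ_{b+1}`, `a ≤ b`, the content
`α(x+1, y−x)` equals `γ^θ_{[a,b]} + (⌊(y−x)/e⌋ − ⌊(1/e)Σ_k (θ_{k+1}−θ_k mod e)⌋)·δ`,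
with `⌊(y−x)/e⌋ ≤ hʳ_{θ_a,θ_{b+1}} − 1`; hence it is `kδ + γ^θ_{[a,b]}` with
`k < max_r hʳ,θ_{[a,b]}`. -/
theorem statement15 (e ℓ : ℕ) (he : 1 < e) (κ : Fin ℓ → ℤ) (ρ : Fin ℓ → ℕ → ℕ)
    (hpart : ∀ r, IsPartitionFun (ρ r))
    (hmc : ∀ (r : Fin ℓ) (x : ℤ),
      x ∈ betaSet (κ r) (ρ r) → x - (e : ℤ) ∈ betaSet (κ r) (ρ r))
    (θ : ℕ → ℕ) (hθ : Set.BijOn θ (Set.Icc 1 e) (Set.Iio e))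
    (hrock : ∀ (r : Fin ℓ) (x y : ℤ) (a b : ℕ), a ∈ Set.Icc 1 e → b ∈ Set.Icc 1 e →
      y ∈ betaSet (κ r) (ρ r) → x ∉ betaSet (κ r) (ρ r) → x < y →
      (x : ZMod e) = (θ a : ZMod e) → (y : ZMod e) = (θ b : ZMod e) → a ≤ b)
    (r : Fin ℓ) (x y : ℤ) (a b : ℕ) (ha : 1 ≤ a) (hab : a ≤ b) (hb : b ≤ e - 1)
    (hx : x ∉ betaSet (κ r) (ρ r)) (hy : y ∈ betaSet (κ r) (ρ r)) (hxy : x < y)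
    (hresx : (x : ZMod e) = (θ a : ZMod e))
    (hresy : (y : ZMod e) = (θ (b + 1) : ZMod e)) :
    (alphaRoot e (x + 1) (y - x).toNat =
      gammaInt e θ a b +
        ((y - x).fdiv (e : ℤ) -
          (((∑ k ∈ Finset.Icc a b, (θ (k + 1) + e - θ k) % e) / e : ℕ) : ℤ)) •
          deltaRoot e) ∧
    ((y - x).fdiv (e : ℤ) ≤
      hIdx e (betaSet (κ r) (ρ r)) ((θ a : ZMod e)) ((θ (b + 1) : ZMod e)) - 1) ∧
    (∃ k : ℤ, ∃ s : Fin ℓ,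
      alphaRoot e (x + 1) (y - x).toNat = k • deltaRoot e + gammaInt e θ a b ∧
      k < ∑ t ∈ Finset.Icc a b,
        hIdx e (betaSet (κ s) (ρ s)) ((θ t : ZMod e)) ((θ (t + 1) : ZMod e))) := by
  haveI : NeZero e := ⟨by omega⟩
  have he0 : (0:ℤ) < (e:ℤ) := by exact_mod_cast (by omega : 0 < e)
  have hθv : ∀ k, a ≤ k → k ≤ b + 1 → θ k < e := by
    intro k h1 h2
    exact Set.mem_Iio.mp (hθ.mapsTo (Set.mem_Icc.mpr ⟨by omega, by omega⟩))
  obtain ⟨G, Scast⟩ := gammaInt_eq e θ a b hab (fun k h1 h2 => hθv k h1 (by omega))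
  set S := ∑ k ∈ Finset.Icc a b, (θ (k + 1) + e - θ k) % e with hSdef
  set L := (y - x).toNat with hLdef
  have hL : (L : ℤ) = y - x := Int.toNat_of_nonneg (by omega)
  have hcastL : (L : ZMod e) = (S : ZMod e) := by
    have h1 : ((L : ℤ) : ZMod e) = (L : ZMod e) := by push_cast; rfl
    rw [← h1, hL, Scast, Int.cast_sub, hresx, hresy]
  have hmod : L % e = S % e := (ZMod.natCast_eq_natCast_iff _ _ _).mp hcastL
  have hfdiv : (y - x).fdiv (e:ℤ) = ((L / e : ℕ) : ℤ) := by
    rw [Int.fdiv_eq_ediv_of_nonneg _ (by omega), ← hL]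
    exact (Int.natCast_div L e).symm
  have part1 : alphaRoot e (x + 1) L =
      gammaInt e θ a b + ((y - x).fdiv (e:ℤ) - ((S / e : ℕ) : ℤ)) • deltaRoot e := by
    rw [G, alphaRoot_decomp e he (x+1) L, alphaRoot_decomp e he _ S, hfdiv]
    have hstart : ((x + 1 : ℤ) : ZMod e) = (((θ a : ℤ) + 1 : ℤ) : ZMod e) := by
      push_cast; rw [hresx]
    rw [alphaRoot_congr e hstart, hmod]
    funext j
    simp only [Pi.add_apply, Pi.smul_apply, deltaRoot, smul_eq_mul]
    ring
  obtain ⟨memA, resA, maxA⟩ := Mmax_spec e he (κ r) (ρ r) (hpart r) ((θ a : ZMod e))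
  obtain ⟨memB, resB, maxB⟩ := Mmax_spec e he (κ r) (ρ r) (hpart r) ((θ (b+1) : ZMod e))
  set Ma := Mmax e (betaSet (κ r) (ρ r)) ((θ a : ZMod e)) with hMa
  set Mb := Mmax e (betaSet (κ r) (ρ r)) ((θ (b+1) : ZMod e)) with hMb
  have hyMb : y ≤ Mb := maxB y hy hresy
  have hxMa : Ma + (e:ℤ) ≤ x :=
    lower_bound e he _ (hmc r) Ma x memA (resA.trans hresx.symm) hx
  have part2 : (y - x).fdiv (e:ℤ) ≤
      hIdx e (betaSet (κ r) (ρ r)) ((θ a : ZMod e)) ((θ (b + 1) : ZMod e)) - 1 := by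
    unfold hIdx
    rw [Int.fdiv_eq_ediv_of_nonneg _ (by omega), Int.fdiv_eq_ediv_of_nonneg _ (by omega)]
    have h1 : y - x ≤ (Mb - Ma) + (-1) * (e:ℤ) := by omega
    have h2 := Int.ediv_le_ediv he0 h1
    rw [Int.add_mul_ediv_right _ _ (by omega : (e:ℤ) ≠ 0)] at h2
    rw [← hMa, ← hMb]
    linarith
  have hexact : ∀ t, a ≤ t → t ≤ b →
      Mmax e (betaSet (κ r) (ρ r)) ((θ (t+1) : ZMod e)) -
        Mmax e (betaSet (κ r) (ρ r)) ((θ t : ZMod e))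
      = (e:ℤ) * hIdx e (betaSet (κ r) (ρ r)) ((θ t : ZMod e)) ((θ (t+1) : ZMod e))
        + (((θ (t + 1) + e - θ t) % e : ℕ) : ℤ) := by
    intro t ht1 ht2
    obtain ⟨m1, r1, -⟩ := Mmax_spec e he (κ r) (ρ r) (hpart r) ((θ t : ZMod e))
    obtain ⟨m2, r2, -⟩ := Mmax_spec e he (κ r) (ρ r) (hpart r) ((θ (t+1) : ZMod e))
    set D := Mmax e (betaSet (κ r) (ρ r)) ((θ (t+1) : ZMod e)) -
        Mmax e (betaSet (κ r) (ρ r)) ((θ t : ZMod e)) with hD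
    set w := (θ (t + 1) + e - θ t) % e with hw'
    have hw : w < e := Nat.mod_lt _ (by omega)
    have hDcast : ((D : ℤ) : ZMod e) = (θ (t+1) : ZMod e) - (θ t : ZMod e) := by
      rw [hD, Int.cast_sub, r1, r2]
    have hdvd : (e:ℤ) ∣ D - (w : ℤ) := by
      rw [← ZMod.intCast_zmod_eq_zero_iff_dvd, Int.cast_sub, hDcast, Int.cast_natCast,
        hw', w_cast e θ t (hθv t ht1 (by omega))]
      ring
    have hmodD : D % (e:ℤ) = (w : ℤ) := by
      have h0 : (D - (w:ℤ)) % (e:ℤ) = 0 := Int.emod_eq_zero_of_dvd hdvd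
      have h1 : D % (e:ℤ) = (w:ℤ) % (e:ℤ) := Int.emod_eq_emod_iff_emod_sub_eq_zero.mpr h0
      rw [h1, Int.emod_eq_of_lt (by positivity) (by exact_mod_cast hw)]
    have hde := Int.mul_ediv_add_emod D (e:ℤ)
    unfold hIdx
    rw [Int.fdiv_eq_ediv_of_nonneg _ (by omega), ← hD]
    linarith
  set H := ∑ t ∈ Finset.Icc a b,
      hIdx e (betaSet (κ r) (ρ r)) ((θ t : ZMod e)) ((θ (t + 1) : ZMod e)) with hH
  have htel : Mb - Ma = (e:ℤ) * H + (S : ℤ) := by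
    have t1 := tele_sum (fun t => Mmax e (betaSet (κ r) (ρ r)) ((θ t : ZMod e))) a b hab
    have t2 : ∑ t ∈ Finset.Icc a b, (Mmax e (betaSet (κ r) (ρ r)) ((θ (t+1) : ZMod e)) -
          Mmax e (betaSet (κ r) (ρ r)) ((θ t : ZMod e)))
        = ∑ t ∈ Finset.Icc a b, ((e:ℤ) * hIdx e (betaSet (κ r) (ρ r)) ((θ t : ZMod e)) ((θ (t+1) : ZMod e))
            + (((θ (t + 1) + e - θ t) % e : ℕ) : ℤ)) :=
      Finset.sum_congr rfl (fun t ht =>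
        hexact t (Finset.mem_Icc.mp ht).1 (Finset.mem_Icc.mp ht).2)
    rw [t2, Finset.sum_add_distrib, ← Finset.mul_sum] at t1
    rw [← t1, hH, hSdef]
    push_cast
    ring
  have hIval : hIdx e (betaSet (κ r) (ρ r)) ((θ a : ZMod e)) ((θ (b+1) : ZMod e))
      = H + ((S / e : ℕ) : ℤ) := by
    unfold hIdx
    rw [Int.fdiv_eq_ediv_of_nonneg _ (by omega), ← hMa, ← hMb]
    have heq : Mb - Ma = (S:ℤ) + H * (e:ℤ) := by rw [htel]; ring
    rw [heq, Int.add_mul_ediv_right _ _ (by omega : (e:ℤ) ≠ 0), Int.natCast_div]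
    ring
  refine ⟨part1, part2, ⟨(y - x).fdiv (e:ℤ) - ((S / e : ℕ) : ℤ), r, ?_, ?_⟩⟩
  · rw [part1, add_comm]
  · rw [hIval] at part2
    rw [← hH]
    linarith
end

section
/- Let e ∈ ℤ_{>1} and d ∈ ℤ_{>0}. In the level-one setting, let ρ be a (κ,θ)-RoCK e-core with d ≤ cap^θ_δ(ρ,κ). The map ν ↦ ν^θ_ρ, defined on e-tuples of partitions ν = (ν^{(0)},…,ν^{(e−1)}) with Σ|ν^{(t)}| = d by modifying beta numbers via m_{θ_{e−t}}(ρ∪ν^θ_ρ, κ)_q = m_{θ_{e−t}}(ρ,κ)_q + e·ν^{(t)}_q (the q-th largest beta number congruent to θ_{e−t} is increased by e·ν^{(t)}_q), is a bijection from the set of such e-tuples onto the set of skew diagrams λ/ρ where λ ranges over partitions of charge κ with cont(λ/ρ) = d·δ. In particular, the number of partitions λ ⊇ ρ of charge κ with cont(λ∖ρ) = dδ equals the number of e-multipartitions of d. -/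
/-- Level-one `θ`-capacity `cap^θ_δ = min{h_{θ_t, θ_{t+1}} : t ∈ [1,e−1]} + 1`. -/
noncomputable def capTheta (e : ℕ) (B : Set ℤ) (θ : ℕ → ℕ) : ℤ :=
  sInf {z : ℤ | ∃ t : ℕ, 1 ≤ t ∧ t + 1 ≤ e ∧
    z = hIdx e B ((θ t : ZMod e)) ((θ (t + 1) : ZMod e))} + 1

/-- `mthBeta e B i q`: the `(q+1)`-st largest element of `B` congruent to `i`
mod `e`. -/
noncomputable def mthBeta (e : ℕ) (B : Set ℤ) (i : ZMod e) : ℕ → ℤ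
  | 0 => sSup {x ∈ B | (x : ZMod e) = i}
  | q + 1 => sSup {x ∈ B | (x : ZMod e) = i ∧ x < mthBeta e B i q}

/-- The Young diagram of the partition `p` with charge `c`: node `(x,y)` with
`x ≥ 1`, `c + 1 ≤ y ≤ c + p_x`. -/
def diag (c : ℤ) (p : ℕ → ℕ) : Set (ℤ × ℤ) :=
  {u | 1 ≤ u.1 ∧ c + 1 ≤ u.2 ∧ u.2 ≤ c + (p ((u.1 - 1).toNat) : ℤ)}

/-- The map `ν ↦ ν^θ_ρ` on the level of beta-number sets: the `q`-th largest beta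
number of `ρ` congruent to `θ_{e−t}` is increased by `e·ν^{(t)}_q`. -/
noncomputable def nuMap (e : ℕ) (c : ℤ) (ρ : ℕ → ℕ) (θ : ℕ → ℕ)
    (ν : Fin e → ℕ → ℕ) : Set ℤ :=
  {y | ∃ t : Fin e, ∃ q : ℕ,
    y = mthBeta e (betaSet c ρ) ((θ (e - (t : ℕ)) : ZMod e)) q + (e : ℤ) * (ν t q : ℤ)}


namespace S19
open Set

/-- A "good" set: bounded above and with elements below any bound. -/
def Good (S : Set ℤ) : Prop := BddAbove S ∧ ∀ b : ℤ, ∃ x ∈ S, x < b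

/-- `enum S q` is the `(q+1)`-st largest element of `S`. -/
noncomputable def enum (S : Set ℤ) : ℕ → ℤ
  | 0 => sSup S
  | q+1 => sSup {x ∈ S | x < enum S q}

variable {S : Set ℤ}

lemma Good.nonempty (hS : Good S) : S.Nonempty := by
  obtain ⟨x, hx, _⟩ := hS.2 0; exact ⟨x, hx⟩

lemma enum_mem (hS : Good S) : ∀ q, enum S q ∈ S
  | 0 => Int.csSup_mem hS.nonempty hS.1
  | (q+1) => by
      have hne : {x ∈ S | x < enum S q}.Nonempty := by
        obtain ⟨x, hx, hlt⟩ := hS.2 (enum S q); exact ⟨x, hx, hlt⟩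
      have hbdd : BddAbove {x ∈ S | x < enum S q} := hS.1.mono (fun x hx => hx.1)
      exact (Int.csSup_mem hne hbdd).1

lemma enum_succ_lt (hS : Good S) (q : ℕ) : enum S (q+1) < enum S q := by
  have hne : {x ∈ S | x < enum S q}.Nonempty := by
    obtain ⟨x, hx, hlt⟩ := hS.2 (enum S q); exact ⟨x, hx, hlt⟩
  have hbdd : BddAbove {x ∈ S | x < enum S q} := hS.1.mono (fun x hx => hx.1)
  exact (Int.csSup_mem hne hbdd).2

lemma enum_strictAnti (hS : Good S) : StrictAnti (enum S) :=
  strictAnti_nat_of_succ_lt (fun q => enum_succ_lt hS q)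

lemma le_enum_zero (hS : Good S) {x : ℤ} (hx : x ∈ S) : x ≤ enum S 0 :=
  le_csSup hS.1 hx

lemma lt_enum_le_succ (hS : Good S) {x : ℤ} {q : ℕ} (hx : x ∈ S)
    (h : x < enum S q) : x ≤ enum S (q+1) :=
  le_csSup (hS.1.mono (fun y hy => hy.1)) ⟨hx, h⟩

lemma above_enum_eq (hS : Good S) : ∀ q, S ∩ Ioi (enum S q) = enum S '' Iio q
  | 0 => by
      ext x
      simp only [mem_inter_iff, mem_Ioi, mem_image, mem_Iio]
      constructor
      · rintro ⟨hx, hlt⟩; exact absurd (le_enum_zero hS hx) (not_le.mpr hlt)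
      · rintro ⟨j, hj, _⟩; omega
  | (q+1) => by
      ext x
      simp only [mem_inter_iff, mem_Ioi, mem_image, mem_Iio]
      constructor
      · rintro ⟨hx, hlt⟩
        rcases lt_trichotomy x (enum S q) with h | h | h
        · exact absurd (lt_enum_le_succ hS hx h) (not_le.mpr hlt)
        · exact ⟨q, by omega, h.symm⟩
        · have := above_enum_eq hS q
          have hx' : x ∈ S ∩ Ioi (enum S q) := ⟨hx, h⟩
          rw [this] at hx'
          obtain ⟨j, hj, hje⟩ := hx'
          have hj' : j < q := hj
          exact ⟨j, by omega, hje⟩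
      · rintro ⟨j, hj, rfl⟩
        have hj' : j < q + 1 := hj
        refine ⟨enum_mem hS j, ?_⟩
        exact enum_strictAnti hS hj'

lemma finite_above (hS : Good S) (x : ℤ) : (S ∩ Ioi x).Finite := by
  obtain ⟨u, hu⟩ := hS.1
  exact (Set.finite_Ioc x u).subset (fun y hy => ⟨hy.2, hu hy.1⟩)

lemma ncard_above_enum (hS : Good S) (q : ℕ) : (S ∩ Ioi (enum S q)).ncard = q := by
  rw [above_enum_eq hS q, Set.ncard_image_of_injOn ((enum_strictAnti hS).injective.injOn)]
  rw [show Iio q = ↑(Finset.Iio q) by simp, Set.ncard_coe_finset]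
  simp

lemma eq_enum_of_ncard (hS : Good S) {x : ℤ} {q : ℕ} (hx : x ∈ S)
    (hn : (S ∩ Ioi x).ncard = q) : x = enum S q := by
  rcases lt_trichotomy x (enum S q) with h | h | h
  · exfalso
    have hsub : insert (enum S q) (S ∩ Ioi (enum S q)) ⊆ S ∩ Ioi x := by
      rintro y (rfl | ⟨hy, hy'⟩)
      · exact ⟨enum_mem hS q, h⟩
      · exact ⟨hy, lt_trans h hy'⟩
    have hfin : (S ∩ Ioi x).Finite := finite_above hS x
    have h1 : (insert (enum S q) (S ∩ Ioi (enum S q))).ncard = q + 1 := by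
      rw [Set.ncard_insert_of_notMem (by simp) (finite_above hS _), ncard_above_enum hS]
    have := Set.ncard_le_ncard hsub hfin
    omega
  · exact h.symm ▸ rfl
  · exfalso
    have hx' : x ∈ S ∩ Ioi (enum S q) := ⟨hx, h⟩
    rw [above_enum_eq hS q] at hx'
    obtain ⟨j, hj, rfl⟩ := hx'
    have hj' : j < q := hj
    rw [ncard_above_enum hS j] at hn
    omega

lemma mem_range_enum (hS : Good S) {x : ℤ} (hx : x ∈ S) : ∃ q, x = enum S q :=
  ⟨(S ∩ Ioi x).ncard, eq_enum_of_ncard hS hx rfl⟩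

/-- Domination: if an injection from `S` into `S'` moves every element weakly up,
then the sorted enumerations dominate. -/
lemma enum_le_enum_of_dom {S' : Set ℤ} (hS : Good S) (hS' : Good S')
    (φ : ℤ → ℤ) (hinj : Set.InjOn φ S) (hmap : ∀ x ∈ S, φ x ∈ S')
    (hge : ∀ x ∈ S, x ≤ φ x) (q : ℕ) : enum S q ≤ enum S' q := by
  by_contra hlt
  push_neg at hlt
  -- the images of enum S 0..q are q+1 elements of S' that are > enum S' q
  have hsub : (fun j => φ (enum S j)) '' Iio (q+1) ⊆ S' ∩ Ioi (enum S' q) := by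
    rintro y ⟨j, hj, rfl⟩
    have hj' : j < q + 1 := hj
    refine ⟨hmap _ (enum_mem hS j), ?_⟩
    have h1 : enum S q ≤ enum S j := (enum_strictAnti hS).antitone (by omega : j ≤ q)
    have h2 := hge _ (enum_mem hS j)
    simp only [mem_Ioi]
    omega
  have hinj2 : Set.InjOn (fun j => φ (enum S j)) (Iio (q+1)) := by
    intro a ha b hb hab
    exact (enum_strictAnti hS).injective
      (hinj (enum_mem hS a) (enum_mem hS b) hab)
  have h1 : ((fun j => φ (enum S j)) '' Iio (q+1)).ncard = q + 1 := by
    rw [Set.ncard_image_of_injOn hinj2,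
      show Iio (q+1) = ↑(Finset.Iio (q+1)) by simp, Set.ncard_coe_finset]
    simp
  have h2 := Set.ncard_le_ncard hsub (finite_above hS' _)
  rw [h1, ncard_above_enum hS'] at h2
  omega

/-! ### Beta sets of partitions -/

/-- The `a`-th beta number. -/
def bnum (c : ℤ) (p : ℕ → ℕ) (a : ℕ) : ℤ := c + (p a : ℤ) - ((a : ℤ) + 1)

lemma betaSet_eq_range (c : ℤ) (p : ℕ → ℕ) : betaSet c p = Set.range (bnum c p) := by
  ext x; simp [betaSet, bnum, eq_comm]

lemma bnum_strictAnti {c : ℤ} {p : ℕ → ℕ} (hp : Antitone p) : StrictAnti (bnum c p) := by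
  intro a b hab
  have h1 : p b ≤ p a := hp hab.le
  have h2 : (b : ℤ) > a := by exact_mod_cast hab
  have : (p b : ℤ) ≤ (p a : ℤ) := by exact_mod_cast h1
  simp only [bnum]; omega

lemma good_betaSet {c : ℤ} {p : ℕ → ℕ} (hp : IsPartitionFun p) : Good (betaSet c p) := by
  constructor
  · refine ⟨c + (p 0 : ℤ) - 1, ?_⟩
    rintro x ⟨a, rfl⟩
    have h1 : p a ≤ p 0 := hp.1 (Nat.zero_le a)
    have : (p a : ℤ) ≤ (p 0 : ℤ) := by exact_mod_cast h1
    have : (0:ℤ) ≤ a := Int.natCast_nonneg a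
    omega
  · intro b
    obtain ⟨N, hN⟩ := hp.2
    set a : ℕ := N + (c - b).toNat with ha
    refine ⟨bnum c p a, (betaSet_eq_range c p) ▸ ⟨a, rfl⟩, ?_⟩
    have h0 : p a = 0 := hN a (by omega)
    have : (c - b).toNat ≤ (a:ℤ) := by exact_mod_cast Nat.le_of_eq rfl |>.trans (Nat.le_add_left _ _)
    have h2 : c - b ≤ (a : ℤ) := le_trans (Int.self_le_toNat _) this
    simp only [bnum, h0]
    omega

lemma enum_betaSet {c : ℤ} {p : ℕ → ℕ} (hp : IsPartitionFun p) (a : ℕ) :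
    enum (betaSet c p) a = bnum c p a := by
  refine (eq_enum_of_ncard (good_betaSet hp) ((betaSet_eq_range c p) ▸ ⟨a, rfl⟩) ?_).symm
  have hset : betaSet c p ∩ Ioi (bnum c p a) = bnum c p '' Iio a := by
    rw [betaSet_eq_range]
    ext x
    simp only [mem_inter_iff, mem_range, mem_Ioi, mem_image, mem_Iio]
    constructor
    · rintro ⟨⟨b, rfl⟩, hb⟩
      refine ⟨b, ?_, rfl⟩
      by_contra hab
      push_neg at hab
      rcases eq_or_lt_of_le hab with rfl | h
      · omega
      · exact absurd hb (not_lt.mpr (bnum_strictAnti hp.1 h).le)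
    · rintro ⟨b, hb, rfl⟩
      exact ⟨⟨b, rfl⟩, bnum_strictAnti hp.1 hb⟩
  rw [hset, Set.ncard_image_of_injOn ((bnum_strictAnti hp.1).injective.injOn),
    show Iio a = ↑(Finset.Iio a) by simp, Set.ncard_coe_finset]
  simp

lemma betaSet_inj {c : ℤ} {p p' : ℕ → ℕ} (hp : IsPartitionFun p) (hp' : IsPartitionFun p')
    (h : betaSet c p = betaSet c p') : p = p' := by
  funext a
  have h1 := enum_betaSet (c := c) hp a
  have h2 := enum_betaSet (c := c) hp' a
  rw [h] at h1
  rw [h1] at h2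
  simp only [bnum] at h2
  omega

/-! ### Building a partition from a good set with known low part -/

lemma ncard_above_of_low {S : Set ℤ} (hS : Good S) {N : ℕ} {L : ℤ}
    (hlow : ∀ x ≤ L, x ∈ S) (hcount : (S ∩ Ioi L).ncard = N) {a : ℕ} (ha : N ≤ a) :
    (S ∩ Ioi (L - (a - N : ℤ))).ncard = a := by
  have hsplit : S ∩ Ioi (L - ((a : ℤ) - N)) = (S ∩ Ioi L) ∪ Ioc (L - ((a:ℤ) - N)) L := by
    ext x
    simp only [mem_inter_iff, mem_Ioi, mem_union, mem_Ioc]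
    constructor
    · rintro ⟨hx, hgt⟩
      rcases le_or_gt x L with h | h
      · exact Or.inr ⟨hgt, h⟩
      · exact Or.inl ⟨hx, h⟩
    · rintro (⟨hx, hgt⟩ | ⟨h1, h2⟩)
      · constructor
        · exact hx
        · have : (N:ℤ) ≤ a := by exact_mod_cast ha
          omega
      · exact ⟨hlow x h2, h1⟩
  have hdisj : Disjoint (S ∩ Ioi L) (Ioc (L - ((a:ℤ) - N)) L) := by
    rw [Set.disjoint_left]
    rintro x ⟨_, hgt⟩ ⟨_, hle⟩
    simp only [mem_Ioi] at hgt
    omega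
  rw [hsplit, Set.ncard_union_eq hdisj (finite_above hS L) (Set.finite_Ioc _ _), hcount,
    show Set.Ioc (L - ((a:ℤ) - N)) L = ↑(Finset.Ioc (L - ((a:ℤ)-N)) L) by simp,
    Set.ncard_coe_finset, Int.card_Ioc]
  have : (N:ℤ) ≤ a := by exact_mod_cast ha
  omega

lemma exists_partition_of_good {S : Set ℤ} {c : ℤ} (hS : Good S) {N : ℕ}
    (hlow : ∀ x ≤ c - (N:ℤ) - 1, x ∈ S) (hcount : (S ∩ Ioi (c - (N:ℤ) - 1)).ncard = N) :
    ∃ lam : ℕ → ℕ, IsPartitionFun lam ∧ betaSet c lam = S ∧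
      (∀ a, (lam a : ℤ) = enum S a - (c - (a:ℤ) - 1)) ∧ (∀ a, N ≤ a → lam a = 0) := by
  set L : ℤ := c - (N:ℤ) - 1 with hL
  have key : ∀ a : ℕ, N ≤ a → enum S a = c - (a:ℤ) - 1 := by
    intro a ha
    refine (eq_enum_of_ncard hS (hlow _ (by omega)) ?_).symm
    have : c - (a:ℤ) - 1 = L - ((a:ℤ) - N) := by omega
    rw [this]
    exact ncard_above_of_low hS hlow hcount ha
  have hge : ∀ a : ℕ, c - (a:ℤ) - 1 ≤ enum S a := by
    intro a
    rcases le_or_gt N a with ha | ha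
    · rw [key a ha]
    · by_contra hcon
      push_neg at hcon
      have hfin1 := finite_above hS (enum S a)
      have hcard1 := ncard_above_enum hS a
      rcases le_or_gt (enum S a) L with h | h
      · have hsub : S ∩ Ioi L ⊆ S ∩ Ioi (enum S a) := by
          rintro x ⟨hx, hgt⟩
          simp only [mem_Ioi] at *
          exact ⟨hx, show enum S a < x by omega⟩
        have := Set.ncard_le_ncard hsub hfin1
        omega
      · have hsub : S ∩ Ioi L ⊆ (Set.Ioc L (enum S a)) ∪ (S ∩ Ioi (enum S a)) := by
          rintro x ⟨hx, hgt⟩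
          simp only [mem_Ioi, mem_union, mem_Ioc, mem_inter_iff] at *
          rcases le_or_gt x (enum S a) with h' | h'
          · exact Or.inl ⟨hgt, h'⟩
          · exact Or.inr ⟨hx, h'⟩
        have h1 := Set.ncard_le_ncard hsub ((Set.finite_Ioc _ _).union hfin1)
        have h2 := Set.ncard_union_le (Set.Ioc L (enum S a)) (S ∩ Ioi (enum S a))
        have h3 : (Set.Ioc L (enum S a)).ncard = (enum S a - L).toNat := by
          rw [show Set.Ioc L (enum S a) = ↑(Finset.Ioc L (enum S a)) by simp,
            Set.ncard_coe_finset, Int.card_Ioc]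
        have hNa : (a:ℤ) < N := by exact_mod_cast ha
        omega
  refine ⟨fun a => (enum S a - (c - (a:ℤ) - 1)).toNat, ⟨?_, ⟨N, ?_⟩⟩, ?_, ?_, ?_⟩
  · apply antitone_nat_of_succ_le
    intro a
    have h1 := enum_succ_lt hS a
    have h2 := hge a
    have h3 := hge (a+1)
    have : ((a:ℕ)+1 : ℤ) = (a:ℤ) + 1 := by push_cast; ring
    apply Int.toNat_le_toNat
    push_cast
    omega
  · intro a ha
    show (enum S a - (c - (a:ℤ) - 1)).toNat = 0
    rw [key a ha]
    simp
  · rw [betaSet_eq_range]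
    apply Set.eq_of_subset_of_subset
    · rintro _ ⟨a, rfl⟩
      have : bnum c (fun a => (enum S a - (c - (a:ℤ) - 1)).toNat) a = enum S a := by
        simp only [bnum]
        rw [Int.toNat_of_nonneg (by have := hge a; omega)]
        ring
      rw [this]
      exact enum_mem hS a
    · intro x hx
      obtain ⟨q, rfl⟩ := mem_range_enum hS hx
      refine ⟨q, ?_⟩
      simp only [bnum]
      rw [Int.toNat_of_nonneg (by have := hge q; omega)]
      ring
  · intro a
    rw [Int.toNat_of_nonneg (by have := hge a; omega)]
  · intro a ha
    show (enum S a - (c - (a:ℤ) - 1)).toNat = 0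
    rw [key a ha]
    simp

/-! ### Residue classes and e-cores -/

lemma res_iff (e : ℕ) (a b : ℤ) : ((a : ZMod e) = (b : ZMod e)) ↔ (e:ℤ) ∣ (a - b) := by
  rw [ZMod.intCast_eq_intCast_iff']
  exact ⟨fun h => Int.ModEq.dvd (Int.ModEq.symm h),
    fun h => Int.modEq_iff_dvd.mpr (by simpa using dvd_neg.mpr h)⟩

/-- Elements of `B` with residue `i`. -/
def resSet (e : ℕ) (B : Set ℤ) (i : ZMod e) : Set ℤ := {x ∈ B | (x : ZMod e) = i}

lemma mthBeta_eq_enum (e : ℕ) (B : Set ℤ) (i : ZMod e) (q : ℕ) :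
    mthBeta e B i q = enum (resSet e B i) q := by
  induction q with
  | zero => rfl
  | succ q ih =>
    show sSup _ = sSup _
    rw [ih]
    congr 1
    ext x
    simp only [resSet, mem_setOf_eq, mem_sep_iff]
    tauto

lemma exists_low_res (e : ℕ) (he : 0 < e) (i : ZMod e) (b : ℤ) :
    ∃ x : ℤ, x < b ∧ ((x : ZMod e) = i) := by
  haveI : NeZero e := ⟨he.ne'⟩
  refine ⟨(i.val : ℤ) - e * ((i.val : ℤ) - b + 1).toNat, ?_, ?_⟩
  · have h1 : ((i.val : ℤ) - b + 1) ≤ ((i.val : ℤ) - b + 1).toNat := Int.self_le_toNat _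
    have h2 : (((i.val : ℤ) - b + 1).toNat : ℤ) ≤ e * ((i.val : ℤ) - b + 1).toNat := by
      have : (1:ℤ) ≤ e := by exact_mod_cast he
      nlinarith [Int.natCast_nonneg (((i.val : ℤ) - b + 1).toNat)]
    omega
  · push_cast
    simp [ZMod.natCast_val, ZMod.natCast_self]

lemma low_betaSet {c : ℤ} {p : ℕ → ℕ} {N : ℕ} (hN : ∀ a, N ≤ a → p a = 0) :
    ∀ x : ℤ, x ≤ c - (N:ℤ) - 1 → x ∈ betaSet c p := by
  intro x hx
  refine ⟨(c - 1 - x).toNat, ?_⟩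
  have h1 : (N:ℤ) ≤ c - 1 - x := by omega
  have h2 : ((c - 1 - x).toNat : ℤ) = c - 1 - x := Int.toNat_of_nonneg (by omega)
  have h3 : N ≤ (c - 1 - x).toNat := by omega
  rw [hN _ h3]
  omega

section Core

variable {e : ℕ} (he : 1 < e) {c : ℤ} {ρ : ℕ → ℕ} (hρ : IsPartitionFun ρ)
variable (hcore : ∀ x ∈ betaSet c ρ, x - (e : ℤ) ∈ betaSet c ρ)

include he in
lemma good_resSet {B : Set ℤ} (hB : Good B) {N : ℕ} (hlow : ∀ x ≤ c - (N:ℤ) - 1, x ∈ B)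
    (i : ZMod e) : Good (resSet e B i) := by
  constructor
  · exact hB.1.mono (fun x hx => hx.1)
  · intro b
    obtain ⟨x, hx1, hx2⟩ := exists_low_res e (by omega) i (min b (c - (N:ℤ) - 1))
    exact ⟨x, ⟨hlow x (le_of_lt (lt_of_lt_of_le hx1 (min_le_right _ _))), hx2⟩,
      lt_of_lt_of_le hx1 (min_le_left _ _)⟩

include hcore in
lemma core_iter {x : ℤ} (hx : x ∈ betaSet c ρ) (k : ℕ) : x - (e:ℤ) * k ∈ betaSet c ρ := by
  induction k with
  | zero => simpa using hx
  | succ k ih =>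
    have h2 := hcore _ ih
    have heq : x - (e:ℤ) * ((k+1 : ℕ) : ℤ) = x - (e:ℤ)*k - e := by push_cast; ring
    rw [heq]
    exact h2

include he hρ hcore in
lemma resSet_core_eq (i : ZMod e) :
    resSet e (betaSet c ρ) i = Set.range (fun k : ℕ => Mmax e (betaSet c ρ) i - (e:ℤ) * k) := by
  obtain ⟨N, hN⟩ := hρ.2
  have hgood : Good (resSet e (betaSet c ρ) i) :=
    good_resSet he (good_betaSet hρ) (low_betaSet hN) i
  have hM : Mmax e (betaSet c ρ) i ∈ resSet e (betaSet c ρ) i :=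
    Int.csSup_mem hgood.nonempty hgood.1
  ext x
  simp only [mem_range]
  constructor
  · intro hx
    have h1 : x ≤ Mmax e (betaSet c ρ) i := le_csSup hgood.1 hx
    have h2 : (e:ℤ) ∣ (Mmax e (betaSet c ρ) i - x) := by
      rw [← res_iff]
      rw [hM.2, hx.2]
    obtain ⟨k, hk⟩ := h2
    have hepos : (0:ℤ) < e := by exact_mod_cast (by omega : 0 < e)
    have hk0 : 0 ≤ k := by nlinarith
    refine ⟨k.toNat, ?_⟩
    show Mmax e (betaSet c ρ) i - (e:ℤ) * ((k.toNat : ℕ) : ℤ) = x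
    rw [Int.toNat_of_nonneg hk0]
    linarith
  · rintro ⟨k, rfl⟩
    refine ⟨core_iter hcore hM.1 k, ?_⟩
    have : ((Mmax e (betaSet c ρ) i - (e:ℤ)*k : ℤ) : ZMod e)
        = ((Mmax e (betaSet c ρ) i : ℤ) : ZMod e) := by
      push_cast
      simp [ZMod.natCast_self]
    rw [this, hM.2]

end Core

lemma ncard_range_above {g : ℕ → ℤ} (hg : StrictAnti g) (q : ℕ) :
    (Set.range g ∩ Ioi (g q)).ncard = q := by
  have hset : Set.range g ∩ Ioi (g q) = g '' Iio q := by
    ext x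
    simp only [mem_inter_iff, mem_range, mem_Ioi, mem_image, mem_Iio]
    constructor
    · rintro ⟨⟨b, rfl⟩, hb⟩
      refine ⟨b, ?_, rfl⟩
      by_contra hab
      push_neg at hab
      rcases eq_or_lt_of_le hab with rfl | h
      · omega
      · exact absurd hb (not_lt.mpr (hg h).le)
    · rintro ⟨b, hb, rfl⟩
      exact ⟨⟨b, rfl⟩, hg hb⟩
  rw [hset, Set.ncard_image_of_injOn (hg.injective.injOn),
    show Iio q = ↑(Finset.Iio q) by simp, Set.ncard_coe_finset]
  simp

section Core2

variable {e : ℕ} (he : 1 < e) {c : ℤ} {ρ : ℕ → ℕ} (hρ : IsPartitionFun ρ)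
variable (hcore : ∀ x ∈ betaSet c ρ, x - (e : ℤ) ∈ betaSet c ρ)

include he in
lemma Msub_strictAnti (M : ℤ) : StrictAnti (fun k : ℕ => M - (e:ℤ) * k) := by
  intro a b hab
  have : (a:ℤ) < b := by exact_mod_cast hab
  have he' : (1:ℤ) ≤ e := by exact_mod_cast (by omega : 1 ≤ e)
  simp only
  nlinarith

include he hρ hcore in
lemma mthBeta_core (i : ZMod e) (q : ℕ) :
    mthBeta e (betaSet c ρ) i q = Mmax e (betaSet c ρ) i - (e:ℤ) * q := by
  obtain ⟨N, hN⟩ := hρ.2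
  have hgood := good_resSet (c:=c) he (good_betaSet hρ) (low_betaSet hN) i
  rw [mthBeta_eq_enum]
  refine (eq_enum_of_ncard hgood ?_ ?_).symm
  · rw [resSet_core_eq he hρ hcore]
    exact ⟨q, rfl⟩
  · rw [resSet_core_eq he hρ hcore]
    exact ncard_range_above (Msub_strictAnti he _) q

include he hρ hcore in
lemma mthBeta_mem (i : ZMod e) (q : ℕ) : mthBeta e (betaSet c ρ) i q ∈ betaSet c ρ := by
  rw [mthBeta_core he hρ hcore]
  have hM : Mmax e (betaSet c ρ) i - (e:ℤ)*(0:ℕ) ∈ resSet e (betaSet c ρ) i := by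
    rw [resSet_core_eq he hρ hcore]; exact ⟨0, rfl⟩
  simp only [Nat.cast_zero, mul_zero, sub_zero] at hM
  exact (core_iter hcore hM.1 q)

include he hρ hcore in
lemma mthBeta_res (i : ZMod e) (q : ℕ) :
    ((mthBeta e (betaSet c ρ) i q : ℤ) : ZMod e) = i := by
  rw [mthBeta_core he hρ hcore]
  have hM : Mmax e (betaSet c ρ) i - (e:ℤ)*(0:ℕ) ∈ resSet e (betaSet c ρ) i := by
    rw [resSet_core_eq he hρ hcore]; exact ⟨0, rfl⟩
  simp only [Nat.cast_zero, mul_zero, sub_zero] at hM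
  have : ((Mmax e (betaSet c ρ) i - (e:ℤ)*q : ℤ) : ZMod e)
      = ((Mmax e (betaSet c ρ) i : ℤ) : ZMod e) := by
    push_cast
    simp [ZMod.natCast_self]
  rw [this, hM.2]

end Core2

/-! ### Counting residues in intervals -/

lemma card_res_Ioc {e : ℕ} (he : 0 < e) (z s t : ℤ) :
    (((Finset.Ioc s t).filter (fun k : ℤ => ((k : ZMod e) = (z : ZMod e)))).card : ℤ)
      = max ((t - z) / e) ((s - z) / e) - (s - z) / e := by
  have hepos : (0:ℤ) < e := by exact_mod_cast he
  have himg : (Finset.Ioc s t).filter (fun k : ℤ => ((k : ZMod e) = (z : ZMod e)))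
      = (Finset.Ioc ((s - z)/e) ((t - z)/e)).image (fun m => z + e * m) := by
    ext k
    simp only [Finset.mem_filter, Finset.mem_Ioc, Finset.mem_image]
    constructor
    · rintro ⟨⟨h1, h2⟩, hres⟩
      have hdvd : (e:ℤ) ∣ (k - z) := (res_iff e k z).mp hres
      obtain ⟨m, hm⟩ := hdvd
      have hcomm : (e:ℤ) * m = m * (e:ℤ) := mul_comm _ _
      refine ⟨m, ⟨?_, ?_⟩, by omega⟩
      · rw [Int.ediv_lt_iff_lt_mul hepos]
        nlinarith [Int.ediv_mul_le (s - z) (ne_of_gt hepos)]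
      · rw [Int.le_ediv_iff_mul_le hepos]
        omega
    · rintro ⟨m, ⟨hm1, hm2⟩, rfl⟩
      have hcomm : (e:ℤ) * m = m * (e:ℤ) := mul_comm _ _
      rw [Int.ediv_lt_iff_lt_mul hepos] at hm1
      rw [Int.le_ediv_iff_mul_le hepos] at hm2
      refine ⟨⟨by omega, by omega⟩, ?_⟩
      rw [res_iff]
      exact ⟨m, by ring⟩
  rw [himg, Finset.card_image_of_injective _ (fun a b hab => by
    exact mul_left_cancel₀ (show (e:ℤ) ≠ 0 by positivity) (by linarith : (e:ℤ)*a = (e:ℤ)*b))]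
  rw [Int.card_Ioc]
  rcases le_or_gt ((t - z)/e) ((s - z)/e) with h | h
  · rw [max_eq_right h]
    omega
  · rw [max_eq_left h.le]
    omega

lemma card_res_Ioc_of_le {e : ℕ} (he : 0 < e) {z s t : ℤ} (hst : s ≤ t) :
    (((Finset.Ioc s t).filter (fun k : ℤ => ((k : ZMod e) = (z : ZMod e)))).card : ℤ)
      = (t - z) / e - (s - z) / e := by
  rw [card_res_Ioc he, max_eq_left (Int.ediv_le_ediv (by exact_mod_cast he) (by omega))]

lemma card_res_Ioc_add_mul {e : ℕ} (he : 0 < e) (z s : ℤ) (n : ℕ) :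
    (((Finset.Ioc s (s + (e:ℤ) * n)).filter
      (fun k : ℤ => ((k : ZMod e) = (z : ZMod e)))).card : ℤ) = n := by
  have h1 : (0:ℤ) ≤ (e:ℤ) * n := by positivity
  rw [card_res_Ioc_of_le he (by omega)]
  have : s + (e:ℤ)*n - z = (s - z) + n * e := by ring
  rw [this, Int.add_mul_ediv_right _ _ (by exact_mod_cast he.ne' : (e:ℤ) ≠ 0)]
  ring

/-! ### Diagrams -/

lemma diag_mono {c : ℤ} {p q : ℕ → ℕ} (h : ∀ a, p a ≤ q a) : diag c p ⊆ diag c q := by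
  rintro ⟨x, y⟩ ⟨h1, h2, h3⟩
  refine ⟨h1, h2, le_trans h3 ?_⟩
  have := h ((x-1).toNat)
  simp only
  omega

lemma le_of_diag_subset {c : ℤ} {p q : ℕ → ℕ} (h : diag c p ⊆ diag c q) (a : ℕ) :
    p a ≤ q a := by
  rcases Nat.eq_zero_or_pos (p a) with h0 | h0
  · omega
  · have hto : (((a:ℤ) + 1) - 1).toNat = a := by omega
    have hmem : (((a:ℤ)+1 : ℤ), c + (p a : ℤ)) ∈ diag c p := by
      refine ⟨by omega, by simp; omega, ?_⟩
      simp only [hto]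
      omega
    have h2 := h hmem
    obtain ⟨_, _, h3⟩ := h2
    simp only [hto] at h3
    omega

lemma skew_res_ncard {e : ℕ} {c : ℤ} {p lam : ℕ → ℕ} {N : ℕ}
    (hple : ∀ a, p a ≤ lam a) (hlamN : ∀ a, N ≤ a → lam a = 0) (z : ℤ) :
    ((diag c lam \ diag c p) ∩ {u : ℤ × ℤ | ((u.2 - u.1 : ℤ) : ZMod e) = (z : ZMod e)}).ncard
      = ∑ a ∈ Finset.range N, ((Finset.Ioc (bnum c p a) (bnum c lam a)).filter
          (fun k : ℤ => ((k : ZMod e) = (z : ZMod e)))).card := by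
  set F : Finset (ℤ × ℤ) := (Finset.range N).biUnion (fun a =>
    ((Finset.Ioc (bnum c p a) (bnum c lam a)).filter
      (fun k : ℤ => ((k : ZMod e) = (z : ZMod e)))).image
        (fun k => ((a:ℤ)+1, k + (a:ℤ) + 1))) with hF
  have hset : (diag c lam \ diag c p) ∩
      {u : ℤ × ℤ | ((u.2 - u.1 : ℤ) : ZMod e) = (z : ZMod e)} = ↑F := by
    ext ⟨x, y⟩
    simp only [hF, mem_inter_iff, mem_diff, mem_setOf_eq, Finset.coe_biUnion,
      Finset.mem_coe, Finset.mem_range, mem_iUnion, Finset.mem_image,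
      Finset.mem_filter, Finset.mem_Ioc, bnum]
    constructor
    · rintro ⟨⟨⟨h1, h2, h3⟩, hnot⟩, hres⟩
      simp only [diag, mem_setOf_eq, not_and, not_le] at hnot
      have h4 : c + (p ((x-1).toNat) : ℤ) < y := hnot h1 h2
      set a : ℕ := (x-1).toNat with ha
      have hx : x = (a:ℤ) + 1 := by omega
      have haN : a < N := by
        by_contra hcon
        push_neg at hcon
        rw [hlamN a hcon] at h3
        simp at h3
        omega
      refine ⟨a, haN, y - x, ⟨⟨by omega, by omega⟩, ?_⟩, ?_⟩
      · exact hres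
      · simp only [Prod.mk.injEq]
        constructor <;> omega
    · rintro ⟨a, haN, k, ⟨⟨hk1, hk2⟩, hkres⟩, heq⟩
      simp only [Prod.mk.injEq] at heq
      obtain ⟨rfl, rfl⟩ := heq
      have hto : ((a:ℤ) + 1 - 1).toNat = a := by omega
      refine ⟨⟨⟨by omega, by omega, ?_⟩, ?_⟩, ?_⟩
      · simp only [hto]; omega
      · rintro ⟨_, _, h3⟩
        simp only [hto] at h3
        omega
      · simpa using hkres
  have hdisj : ∀ a ∈ Finset.range N, ∀ b ∈ Finset.range N, a ≠ b →
      Disjoint (((Finset.Ioc (bnum c p a) (bnum c lam a)).filter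
          (fun k : ℤ => ((k : ZMod e) = (z : ZMod e)))).image
            (fun k => ((a:ℤ)+1, k + (a:ℤ) + 1)))
        (((Finset.Ioc (bnum c p b) (bnum c lam b)).filter
          (fun k : ℤ => ((k : ZMod e) = (z : ZMod e)))).image
            (fun k => ((b:ℤ)+1, k + (b:ℤ) + 1))) := by
    intro a _ b _ hab
    rw [Finset.disjoint_left]
    rintro ⟨x, y⟩ hxa hxb
    simp only [Finset.mem_image] at hxa hxb
    obtain ⟨k1, _, hk1⟩ := hxa
    obtain ⟨k2, _, hk2⟩ := hxb
    simp only [Prod.mk.injEq] at hk1 hk2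
    apply hab
    omega
  rw [hset, Set.ncard_coe_finset, hF, Finset.card_biUnion hdisj]
  refine Finset.sum_congr rfl (fun a _ => ?_)
  exact Finset.card_image_of_injective _ (fun k1 k2 h => by
    simp only [Prod.mk.injEq] at h; omega)

/-! ### Residue labels -/

section Main

variable {e : ℕ} {c : ℤ} {ρ : ℕ → ℕ} {θ : ℕ → ℕ}

/-- The residue associated to the component `t`. -/
def resOf (e : ℕ) (θ : ℕ → ℕ) (t : Fin e) : ZMod e := ((θ (e - (t : ℕ)) : ℕ) : ZMod e)

lemma natCast_zmod_inj {e : ℕ} (he : 0 < e) {a b : ℕ} (ha : a < e) (hb : b < e)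
    (h : (a : ZMod e) = (b : ZMod e)) : a = b := by
  haveI : NeZero e := ⟨he.ne'⟩
  have h1 := ZMod.val_cast_of_lt ha
  have h2 := ZMod.val_cast_of_lt hb
  rw [h] at h1
  omega

lemma resOf_inj (he : 1 < e) (hθ : Set.BijOn θ (Set.Icc 1 e) (Set.Iio e)) :
    Function.Injective (resOf e θ) := by
  intro t s hts
  have ht0 := t.isLt
  have hs0 := s.isLt
  have ht1 : e - (t:ℕ) ∈ Set.Icc 1 e := ⟨by omega, by omega⟩
  have hs1 : e - (s:ℕ) ∈ Set.Icc 1 e := ⟨by omega, by omega⟩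
  have ht2 : θ (e - (t:ℕ)) < e := hθ.mapsTo ht1
  have hs2 : θ (e - (s:ℕ)) < e := hθ.mapsTo hs1
  have h3 : θ (e - (t:ℕ)) = θ (e - (s:ℕ)) := natCast_zmod_inj (by omega) ht2 hs2 hts
  have h4 := hθ.injOn ht1 hs1 h3
  exact Fin.ext (by omega)

lemma resOf_surj (he : 1 < e) (hθ : Set.BijOn θ (Set.Icc 1 e) (Set.Iio e)) (i : ZMod e) :
    ∃ t : Fin e, resOf e θ t = i := by
  haveI : NeZero e := ⟨by omega⟩
  have hiv : i.val < e := ZMod.val_lt i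
  obtain ⟨a, ha, hθa⟩ := hθ.surjOn (show i.val ∈ Set.Iio e from hiv)
  have ha' : 1 ≤ a ∧ a ≤ e := ha
  refine ⟨⟨e - a, by omega⟩, ?_⟩
  show ((θ (e - (e - a)) : ℕ) : ZMod e) = i
  have h1 : e - (e - a) = a := by omega
  rw [h1, hθa]
  simp [ZMod.natCast_val]

/-- The master forward lemma: the image of a valid `ν` under `nuMap` is the beta set of
a partition `lam ⊇ ρ` whose skew diagram has `∑|ν|` nodes of each residue. -/
lemma forward (he : 1 < e) (hρ : IsPartitionFun ρ)
    (hcore : ∀ x ∈ betaSet c ρ, x - (e : ℤ) ∈ betaSet c ρ)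
    (hθ : Set.BijOn θ (Set.Icc 1 e) (Set.Iio e))
    (ν : Fin e → ℕ → ℕ) (hν : ∀ t, IsPartitionFun (ν t)) :
    ∃ lam : ℕ → ℕ, IsPartitionFun lam ∧ betaSet c lam = nuMap e c ρ θ ν ∧
      (∀ a, ρ a ≤ lam a) ∧
      ∀ z : ℤ, ((diag c lam \ diag c ρ) ∩
          {u : ℤ × ℤ | ((u.2 - u.1 : ℤ) : ZMod e) = (z : ZMod e)}).ncard
        = ∑ t : Fin e, ∑ᶠ q : ℕ, ν t q := by
  haveI : NeZero e := ⟨by omega⟩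
  have hepos : (0:ℤ) < (e:ℤ) := by exact_mod_cast (by omega : 0 < e)
  have hBgood : Good (betaSet c ρ) := good_betaSet hρ
  obtain ⟨N₀, hN₀⟩ := hρ.2
  choose g hg using fun t => (hν t).2
  obtain ⟨Q, hQ⟩ : ∃ Q : ℕ, ∀ t q, Q < q → ν t q = 0 :=
    ⟨Finset.univ.sup g, fun t q h =>
      hg t q (le_trans (Finset.le_sup (Finset.mem_univ t)) h.le)⟩
  obtain ⟨M, hM⟩ : ∃ M : Fin e → ℤ, ∀ t, M t = Mmax e (betaSet c ρ) (resOf e θ t) :=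
    ⟨_, fun _ => rfl⟩
  have hMres : ∀ t, ((M t : ℤ) : ZMod e) = resOf e θ t := by
    intro t
    have h1 := mthBeta_res (c := c) (ρ := ρ) he hρ hcore (resOf e θ t) 0
    rw [mthBeta_core he hρ hcore] at h1
    simpa [hM] using h1
  have hrangeB : ∀ t, resSet e (betaSet c ρ) (resOf e θ t)
      = Set.range (fun k : ℕ => M t - (e:ℤ) * k) := by
    intro t
    rw [resSet_core_eq he hρ hcore, hM]
  obtain ⟨N, hNN₀, hNM⟩ : ∃ N : ℕ, N₀ ≤ N ∧
      ∀ t, c - (N:ℤ) - 1 < M t - (e:ℤ)*((Q:ℤ)+1) := by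
    refine ⟨max N₀ (Finset.univ.sup (fun t => (c - M t + (e:ℤ)*((Q:ℤ)+1)).toNat + 1)),
      le_max_left _ _, ?_⟩
    intro t
    have h1 : (c - M t + (e:ℤ)*((Q:ℤ)+1)).toNat + 1 ≤
        max N₀ (Finset.univ.sup (fun t => (c - M t + (e:ℤ)*((Q:ℤ)+1)).toNat + 1)) :=
      le_trans (Finset.le_sup (f := fun t => (c - M t + (e:ℤ)*((Q:ℤ)+1)).toNat + 1)
        (Finset.mem_univ t)) (le_max_right _ _)
    have h2 := Int.self_le_toNat (c - M t + (e:ℤ)*((Q:ℤ)+1))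
    omega
  obtain ⟨L, hL⟩ : ∃ L : ℤ, L = c - (N:ℤ) - 1 := ⟨_, rfl⟩
  have hLM : ∀ t, L < M t - (e:ℤ)*((Q:ℤ)+1) := fun t => hL ▸ hNM t
  have hρN : ∀ a, N ≤ a → ρ a = 0 := fun a ha => hN₀ a (by omega)
  have hlowB : ∀ x ≤ L, x ∈ betaSet c ρ := fun x hx =>
    low_betaSet hN₀ x (by omega)
  obtain ⟨f, hf⟩ : ∃ f : Fin e → ℕ → ℤ,
      ∀ t q, f t q = M t + (e:ℤ) * (ν t q : ℤ) - (e:ℤ) * (q:ℤ) := ⟨_, fun _ _ => rfl⟩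
  have hfres : ∀ t q, ((f t q : ℤ) : ZMod e) = resOf e θ t := by
    intro t q
    have h2 : ((f t q : ℤ) : ZMod e) = ((M t : ℤ) : ZMod e) := by
      rw [hf]; push_cast; simp [ZMod.natCast_self]
    rw [h2, hMres]
  have hfstrict : ∀ t, StrictAnti (f t) := by
    intro t
    apply strictAnti_nat_of_succ_lt
    intro q
    have h1 : ν t (q+1) ≤ ν t q := (hν t).1 (Nat.le_succ q)
    have h1' : ((ν t (q+1) : ℕ) : ℤ) ≤ ((ν t q : ℕ) : ℤ) := by exact_mod_cast h1
    rw [hf, hf]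
    push_cast
    nlinarith
  have hnu : nuMap e c ρ θ ν = {y | ∃ t q, y = f t q} := by
    ext y
    simp only [nuMap, mem_setOf_eq]
    constructor
    · rintro ⟨t, q, rfl⟩
      refine ⟨t, q, ?_⟩
      rw [show ((θ (e - (t:ℕ)) : ℕ) : ZMod e) = resOf e θ t from rfl,
        mthBeta_core he hρ hcore, hf, ← hM]
      ring
    · rintro ⟨t, q, rfl⟩
      refine ⟨t, q, ?_⟩
      rw [show ((θ (e - (t:ℕ)) : ℕ) : ZMod e) = resOf e θ t from rfl,
        mthBeta_core he hρ hcore, hf, ← hM]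
      ring
  -- the shift map ψ
  choose σ hσ using resOf_surj he hθ
  have hσres : ∀ t, σ (resOf e θ t) = t := fun t => resOf_inj he hθ (hσ (resOf e θ t))
  obtain ⟨ψ, hψ⟩ : ∃ ψ : ℤ → ℤ, ∀ x, ψ x = x + (e:ℤ) *
      (ν (σ ((x : ZMod e))) (((M (σ ((x : ZMod e))) - x)/(e:ℤ)).toNat) : ℤ) :=
    ⟨_, fun _ => rfl⟩
  have hψ_eval : ∀ t (k : ℕ), ψ (M t - (e:ℤ)*(k:ℤ)) = f t k := by
    intro t k
    have hres : (((M t - (e:ℤ)*(k:ℤ) : ℤ)) : ZMod e) = resOf e θ t := by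
      have : (((M t - (e:ℤ)*(k:ℤ) : ℤ)) : ZMod e) = ((M t : ℤ) : ZMod e) := by
        push_cast; simp [ZMod.natCast_self]
      rw [this, hMres]
    rw [hψ, hres, hσres]
    have h1 : M t - (M t - (e:ℤ)*(k:ℤ)) = (e:ℤ)*(k:ℤ) := by ring
    rw [h1, Int.mul_ediv_cancel_left _ hepos.ne']
    rw [Int.toNat_natCast, hf]
    ring
  have hmemB_rep : ∀ x ∈ betaSet c ρ, ∃ t : Fin e, ∃ k : ℕ, x = M t - (e:ℤ)*(k:ℤ) := by
    intro x hx
    obtain ⟨t, ht⟩ := resOf_surj he hθ ((x : ZMod e))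
    have hxres : x ∈ resSet e (betaSet c ρ) (resOf e θ t) := ⟨hx, ht.symm⟩
    rw [hrangeB t] at hxres
    obtain ⟨k, hk⟩ := hxres
    exact ⟨t, k, hk.symm⟩
  have hfmemB : ∀ t (k : ℕ), M t - (e:ℤ)*(k:ℤ) ∈ betaSet c ρ := by
    intro t k
    have : M t - (e:ℤ)*(k:ℤ) ∈ resSet e (betaSet c ρ) (resOf e θ t) := by
      rw [hrangeB t]; exact ⟨k, rfl⟩
    exact this.1
  have hQk : ∀ t (k : ℕ), M t - (e:ℤ)*(k:ℤ) ≤ L → Q < k := by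
    intro t k hk
    by_contra hc
    push_neg at hc
    have h1 : (k:ℤ) ≤ (Q:ℤ) := by exact_mod_cast hc
    have h2 := hLM t
    nlinarith
  have hψ_id : ∀ x ∈ betaSet c ρ, x ≤ L → ψ x = x := by
    intro x hx hxL
    obtain ⟨t, k, rfl⟩ := hmemB_rep x hx
    rw [hψ_eval, hf, hQ t k (hQk t k hxL)]
    push_cast
    ring
  have hψ_memS : ∀ x ∈ betaSet c ρ, ψ x ∈ nuMap e c ρ θ ν := by
    intro x hx
    obtain ⟨t, k, rfl⟩ := hmemB_rep x hx
    rw [hψ_eval, hnu]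
    exact ⟨t, k, rfl⟩
  have hψ_ge : ∀ x ∈ betaSet c ρ, x ≤ ψ x := by
    intro x _
    rw [hψ]
    have : (0:ℤ) ≤ (e:ℤ) * (ν (σ ((x : ZMod e))) (((M (σ ((x : ZMod e))) - x)/(e:ℤ)).toNat) : ℤ) := by
      positivity
    omega
  have hψ_inj : Set.InjOn ψ (betaSet c ρ) := by
    intro x hx y hy hxy
    obtain ⟨t, k, rfl⟩ := hmemB_rep x hx
    obtain ⟨s, l, rfl⟩ := hmemB_rep y hy
    rw [hψ_eval, hψ_eval] at hxy
    have ht : resOf e θ t = resOf e θ s := by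
      rw [← hfres t k, ← hfres s l, hxy]
    obtain rfl := resOf_inj he hθ ht
    obtain rfl := (hfstrict t).injective hxy
    rfl
  have hlowS : ∀ x ≤ L, x ∈ nuMap e c ρ θ ν := by
    intro x hx
    have hxB := hlowB x hx
    obtain ⟨t, k, rfl⟩ := hmemB_rep x hxB
    have := hψ_memS _ hxB
    rwa [hψ_id _ hxB hx] at this
  have hSgood : Good (nuMap e c ρ θ ν) := by
    constructor
    · haveI : Nonempty (Fin e) := ⟨⟨0, by omega⟩⟩
      refine ⟨Finset.univ.sup' Finset.univ_nonempty (fun t => M t + (e:ℤ) * (ν t 0 : ℤ)), ?_⟩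
      rintro y hy
      rw [hnu] at hy
      obtain ⟨t, q, rfl⟩ := hy
      have h1 : ν t q ≤ ν t 0 := (hν t).1 (Nat.zero_le q)
      have h1' : ((ν t q : ℕ) : ℤ) ≤ ((ν t 0 : ℕ) : ℤ) := by exact_mod_cast h1
      have h2 : M t + (e:ℤ) * (ν t 0 : ℤ) ≤
          Finset.univ.sup' Finset.univ_nonempty (fun t => M t + (e:ℤ) * (ν t 0 : ℤ)) :=
        Finset.le_sup' (f := fun t => M t + (e:ℤ) * (ν t 0 : ℤ)) (Finset.mem_univ t)
      rw [hf]
      have h3 : (0:ℤ) ≤ (e:ℤ)*(q:ℤ) := by positivity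
      nlinarith
    · intro b
      exact ⟨min b L - 1, hlowS _ (by omega), by omega⟩
  have hcountB : (betaSet c ρ ∩ Ioi L).ncard = N := by
    have hset : betaSet c ρ ∩ Ioi L = bnum c ρ '' Iio N := by
      ext x
      simp only [mem_inter_iff, mem_Ioi, mem_image, mem_Iio]
      constructor
      · rintro ⟨hx, hgt⟩
        rw [betaSet_eq_range] at hx
        obtain ⟨a, rfl⟩ := hx
        refine ⟨a, ?_, rfl⟩
        by_contra hc
        push_neg at hc
        have h0 : ρ a = 0 := hρN a hc
        simp only [bnum, h0] at hgt
        have : (N:ℤ) ≤ (a:ℤ) := by exact_mod_cast hc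
        omega
      · rintro ⟨a, ha, rfl⟩
        refine ⟨(betaSet_eq_range c ρ) ▸ ⟨a, rfl⟩, ?_⟩
        have : (a:ℤ) < (N:ℤ) := by exact_mod_cast ha
        simp only [bnum, mem_Ioi]
        have : (0:ℤ) ≤ (ρ a : ℤ) := by positivity
        omega
    rw [hset, Set.ncard_image_of_injOn ((bnum_strictAnti hρ.1).injective.injOn),
      show Iio N = ↑(Finset.Iio N) by simp, Set.ncard_coe_finset]
    simp
  have himg : ψ '' (betaSet c ρ ∩ Ioi L) = nuMap e c ρ θ ν ∩ Ioi L := by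
    apply Set.eq_of_subset_of_subset
    · rintro y ⟨x, ⟨hx, hgt⟩, rfl⟩
      exact ⟨hψ_memS x hx, lt_of_lt_of_le hgt (hψ_ge x hx)⟩
    · rintro y ⟨hy, hgt⟩
      rw [hnu] at hy
      obtain ⟨t, q, rfl⟩ := hy
      refine ⟨M t - (e:ℤ)*(q:ℤ), ⟨hfmemB t q, ?_⟩, hψ_eval t q⟩
      simp only [mem_Ioi]
      by_contra hc
      push_neg at hc
      have h5 := hψ_id _ (hfmemB t q) hc
      rw [hψ_eval] at h5
      rw [h5] at hgt
      simp only [mem_Ioi] at hgt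
      omega
  have hcountS : (nuMap e c ρ θ ν ∩ Ioi L).ncard = N := by
    rw [← himg, Set.ncard_image_of_injOn (hψ_inj.mono inter_subset_left), hcountB]
  obtain ⟨lam, hlam, hlamβ, hlamval, hlamzero⟩ :=
    exists_partition_of_good (c := c) hSgood (hL ▸ hlowS) (by rw [← hL]; exact hcountS)
  have hdom : ∀ a, ρ a ≤ lam a := by
    intro a
    have h1 := enum_le_enum_of_dom hBgood hSgood ψ hψ_inj hψ_memS hψ_ge a
    rw [enum_betaSet hρ a] at h1
    have h2 := hlamval a
    simp only [bnum] at h1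
    omega
  have hbnumlam : ∀ a, bnum c lam a = enum (nuMap e c ρ θ ν) a := by
    intro a
    have h2 := hlamval a
    simp only [bnum]
    omega
  refine ⟨lam, hlam, hlamβ, hdom, ?_⟩
  intro z
  rw [skew_res_ncard hdom hlamzero z]
  -- residue of M t - e*k
  have hMkres : ∀ (t : Fin e) (k : ℕ), (((M t - (e:ℤ)*(k:ℤ) : ℤ)) : ZMod e) = resOf e θ t := by
    intro t k
    have h2 : (((M t - (e:ℤ)*(k:ℤ) : ℤ)) : ZMod e) = ((M t : ℤ) : ZMod e) := by
      push_cast; simp [ZMod.natCast_self]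
    rw [h2, hMres]
  -- cutoffs per residue
  obtain ⟨KL, hKL⟩ : ∃ KL : Fin e → ℕ, ∀ t, (KL t : ℤ) = (M t - L + (e:ℤ) - 1)/(e:ℤ) := by
    refine ⟨fun t => ((M t - L + (e:ℤ) - 1)/(e:ℤ)).toNat, fun t => ?_⟩
    have h2 := hLM t
    have h3 : (0:ℤ) ≤ (e:ℤ)*((Q:ℤ)+1) := by positivity
    have h4 : 1 ≤ M t - L := by nlinarith
    refine Int.toNat_of_nonneg (Int.ediv_nonneg (by omega) hepos.le)
  have hKLdiv : ∀ t, (e:ℤ) * (KL t : ℤ) ≤ M t - L + (e:ℤ) - 1 ∧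
      M t - L ≤ (e:ℤ) * (KL t : ℤ) := by
    intro t
    have h1 := Int.mul_ediv_add_emod (M t - L + (e:ℤ) - 1) (e:ℤ)
    have h2 := Int.emod_nonneg (M t - L + (e:ℤ) - 1) hepos.ne'
    have h3 := Int.emod_lt_of_pos (M t - L + (e:ℤ) - 1) hepos
    rw [hKL t]
    omega
  have hKL1 : ∀ (t : Fin e) (k : ℕ), k < KL t → L < M t - (e:ℤ)*(k:ℤ) := by
    intro t k hk
    have h1 : (k:ℤ) ≤ (KL t : ℤ) - 1 := by omega
    have h2 := (hKLdiv t).1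
    have h3 : (e:ℤ)*(k:ℤ) ≤ (e:ℤ)*((KL t : ℤ) - 1) :=
      mul_le_mul_of_nonneg_left h1 hepos.le
    nlinarith
  have hKL2 : ∀ (t : Fin e) (k : ℕ), KL t ≤ k → M t - (e:ℤ)*(k:ℤ) ≤ L := by
    intro t k hk
    have h1 : (KL t : ℤ) ≤ (k:ℤ) := by exact_mod_cast hk
    have h2 := (hKLdiv t).2
    have h3 : (e:ℤ)*(KL t : ℤ) ≤ (e:ℤ)*(k:ℤ) := mul_le_mul_of_nonneg_left h1 hepos.le
    omega
  have hKLgt : ∀ (t : Fin e) (k : ℕ), L < M t - (e:ℤ)*(k:ℤ) → k < KL t := by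
    intro t k hk
    by_contra hc
    push_neg at hc
    exact absurd (hKL2 t k hc) (not_le.mpr hk)
  have hKLQ : ∀ t : Fin e, Q < KL t := by
    intro t
    apply hKLgt
    have h2 := hLM t
    nlinarith
  -- the finsets
  have hcoeFS : ↑((Finset.range N).image (fun a => bnum c lam a))
      = nuMap e c ρ θ ν ∩ Ioi L := by
    rw [Finset.coe_image, Finset.coe_range]
    ext x
    simp only [mem_image, mem_Iio, mem_inter_iff, mem_Ioi]
    constructor
    · rintro ⟨a, ha, rfl⟩
      constructor
      · rw [← hlamβ, betaSet_eq_range]; exact ⟨a, rfl⟩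
      · have h1 := hdom a
        have h1' : ((ρ a : ℕ):ℤ) ≤ ((lam a : ℕ):ℤ) := by exact_mod_cast h1
        have h2 : (a:ℤ) < (N:ℤ) := by exact_mod_cast ha
        have h3 : (0:ℤ) ≤ (ρ a : ℤ) := by positivity
        simp only [bnum]
        omega
    · rintro ⟨hx, hgt⟩
      rw [← hlamβ, betaSet_eq_range] at hx
      obtain ⟨a, rfl⟩ := hx
      refine ⟨a, ?_, rfl⟩
      by_contra hc
      push_neg at hc
      have h0 : lam a = 0 := hlamzero a hc
      have h2 : (N:ℤ) ≤ (a:ℤ) := by exact_mod_cast hc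
      simp only [bnum, h0] at hgt
      omega
  have hcoeFB : ↑((Finset.range N).image (fun a => bnum c ρ a))
      = betaSet c ρ ∩ Ioi L := by
    rw [Finset.coe_image, Finset.coe_range]
    ext x
    simp only [mem_image, mem_Iio, mem_inter_iff, mem_Ioi]
    constructor
    · rintro ⟨a, ha, rfl⟩
      refine ⟨(betaSet_eq_range c ρ) ▸ ⟨a, rfl⟩, ?_⟩
      have h2 : (a:ℤ) < (N:ℤ) := by exact_mod_cast ha
      have h3 : (0:ℤ) ≤ (ρ a : ℤ) := by positivity
      simp only [bnum]
      omega
    · rintro ⟨hx, hgt⟩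
      rw [betaSet_eq_range] at hx
      obtain ⟨a, rfl⟩ := hx
      refine ⟨a, ?_, rfl⟩
      by_contra hc
      push_neg at hc
      have h0 : ρ a = 0 := hρN a hc
      have h2 : (N:ℤ) ≤ (a:ℤ) := by exact_mod_cast hc
      simp only [bnum, h0] at hgt
      omega
  have hFS_eq : (Finset.range N).image (fun a => bnum c lam a)
      = ((Finset.range N).image (fun a => bnum c ρ a)).image ψ := by
    apply Finset.coe_injective
    rw [hcoeFS, Finset.coe_image, hcoeFB, ← himg]
  have hFB_eq : (Finset.range N).image (fun a => bnum c ρ a)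
      = Finset.univ.biUnion (fun t => (Finset.range (KL t)).image
          (fun k : ℕ => M t - (e:ℤ)*(k:ℤ))) := by
    apply Finset.coe_injective
    rw [hcoeFB]
    simp only [Finset.coe_biUnion, Finset.coe_univ, mem_univ, iUnion_true,
      Finset.coe_image, Finset.coe_range]
    ext x
    simp only [mem_inter_iff, mem_Ioi, mem_iUnion, mem_image, mem_Iio]
    constructor
    · rintro ⟨hx, hgt⟩
      obtain ⟨t, k, rfl⟩ := hmemB_rep x hx
      exact ⟨t, k, hKLgt t k hgt, rfl⟩
    · rintro ⟨t, k, hk, rfl⟩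
      exact ⟨hfmemB t k, hKL1 t k hk⟩
  -- disjointness of the biUnion pieces
  have hdisjU : ∀ t ∈ Finset.univ, ∀ s ∈ Finset.univ, t ≠ s →
      Disjoint ((Finset.range (KL t)).image (fun k : ℕ => M t - (e:ℤ)*(k:ℤ)))
        ((Finset.range (KL s)).image (fun k : ℕ => M s - (e:ℤ)*(k:ℤ))) := by
    intro t _ s _ hts
    rw [Finset.disjoint_left]
    intro x hxt hxs
    simp only [Finset.mem_image, Finset.mem_range] at hxt hxs
    obtain ⟨k1, _, hk1⟩ := hxt
    obtain ⟨k2, _, hk2⟩ := hxs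
    apply hts
    apply resOf_inj he hθ
    rw [← hMkres t k1, ← hMkres s k2, hk1, hk2]
  -- the ℤ-valued computation
  have hinjMk : ∀ t : Fin e, Function.Injective (fun k : ℕ => M t - (e:ℤ)*(k:ℤ)) := by
    intro t
    have h := Msub_strictAnti (e := e) he (M t)
    exact h.injective
  have hptwise : ∀ (t : Fin e) (k : ℕ),
      (ψ (M t - (e:ℤ)*(k:ℤ)) - z)/(e:ℤ) - ((M t - (e:ℤ)*(k:ℤ)) - z)/(e:ℤ)
        = (ν t k : ℤ) := by
    intro t k
    rw [hψ_eval, hf]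
    have h1 : M t + (e:ℤ)*(ν t k : ℤ) - (e:ℤ)*(k:ℤ) - z
        = ((M t - (e:ℤ)*(k:ℤ)) - z) + (ν t k : ℤ) * (e:ℤ) := by ring
    rw [h1, Int.add_mul_ediv_right _ _ hepos.ne']
    ring
  have hfinsum : ∀ t : Fin e, ∑ᶠ q : ℕ, ν t q = ∑ k ∈ Finset.range (KL t), ν t k := by
    intro t
    apply finsum_eq_finset_sum_of_support_subset
    intro x hx
    simp only [Function.mem_support] at hx
    simp only [Finset.coe_range, Set.mem_Iio]
    by_contra hc
    push_neg at hc
    exact hx (hQ t x (by have := hKLQ t; omega))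
  have hcards : ∀ a ∈ Finset.range N,
      ((((Finset.Ioc (bnum c ρ a) (bnum c lam a)).filter
        (fun k : ℤ => ((k : ZMod e) = (z : ZMod e)))).card : ℕ) : ℤ)
        = (bnum c lam a - z)/(e:ℤ) - (bnum c ρ a - z)/(e:ℤ) := by
    intro a _
    apply card_res_Ioc_of_le (by omega : 0 < e)
    have h1 := hdom a
    have h1' : ((ρ a : ℕ):ℤ) ≤ ((lam a : ℕ):ℤ) := by exact_mod_cast h1
    simp only [bnum]
    omega
  have hinjbl : Set.InjOn (fun a => bnum c lam a) ↑(Finset.range N) :=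
    fun a _ b _ h => (bnum_strictAnti hlam.1).injective h
  have hinjbρ : Set.InjOn (fun a => bnum c ρ a) ↑(Finset.range N) :=
    fun a _ b _ h => (bnum_strictAnti hρ.1).injective h
  have hinjψFB : Set.InjOn ψ ↑((Finset.range N).image (fun a => bnum c ρ a)) := by
    intro x hx y hy hxy
    rw [hcoeFB] at hx hy
    exact hψ_inj hx.1 hy.1 hxy
  have key : ((∑ a ∈ Finset.range N, ((Finset.Ioc (bnum c ρ a) (bnum c lam a)).filter
      (fun k : ℤ => ((k : ZMod e) = (z : ZMod e)))).card : ℕ) : ℤ)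
      = ((∑ t : Fin e, ∑ᶠ q : ℕ, ν t q : ℕ) : ℤ) := by
    push_cast
    rw [Finset.sum_congr rfl hcards, Finset.sum_sub_distrib]
    have e1 : ∑ x ∈ (Finset.range N).image (fun a => bnum c lam a), (x - z)/(e:ℤ)
        = ∑ a ∈ Finset.range N, (bnum c lam a - z)/(e:ℤ) :=
      Finset.sum_image (fun a ha b hb h => hinjbl ha hb h)
    have e2 : ∑ x ∈ (Finset.range N).image (fun a => bnum c ρ a), (x - z)/(e:ℤ)
        = ∑ a ∈ Finset.range N, (bnum c ρ a - z)/(e:ℤ) :=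
      Finset.sum_image (fun a ha b hb h => hinjbρ ha hb h)
    rw [← e1, ← e2, hFS_eq]
    have e4 : ∑ x ∈ ((Finset.range N).image (fun a => bnum c ρ a)).image ψ, (x - z)/(e:ℤ)
        = ∑ x ∈ (Finset.range N).image (fun a => bnum c ρ a), (ψ x - z)/(e:ℤ) :=
      Finset.sum_image (fun a ha b hb h => hinjψFB ha hb h)
    rw [e4]
    rw [← Finset.sum_sub_distrib]
    rw [hFB_eq, Finset.sum_biUnion hdisjU]
    have e3 : ∀ t : Fin e, ∑ x ∈ (Finset.range (KL t)).image (fun k : ℕ => M t - (e:ℤ)*(k:ℤ)),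
        ((ψ x - z)/(e:ℤ) - (x - z)/(e:ℤ)) = ∑ k ∈ Finset.range (KL t), (ν t k : ℤ) := by
      intro t
      have e5 : ∑ x ∈ (Finset.range (KL t)).image (fun k : ℕ => M t - (e:ℤ)*(k:ℤ)),
          ((ψ x - z)/(e:ℤ) - (x - z)/(e:ℤ))
          = ∑ k ∈ Finset.range (KL t), ((ψ (M t - (e:ℤ)*(k:ℤ)) - z)/(e:ℤ)
              - ((M t - (e:ℤ)*(k:ℤ)) - z)/(e:ℤ)) :=
        Finset.sum_image (fun a _ b _ h => hinjMk t h)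
      rw [e5]
      exact Finset.sum_congr rfl (fun k _ => hptwise t k)
    rw [Finset.sum_congr rfl (fun t _ => e3 t)]
    refine Finset.sum_congr rfl (fun t _ => ?_)
    rw [hfinsum t]
    push_cast
    rfl
  exact_mod_cast key

end Main

/-! ### Injectivity -/

lemma good_range_strictAnti {g : ℕ → ℤ} (hg : StrictAnti g) : Good (Set.range g) := by
  have hdrop : ∀ q : ℕ, g q ≤ g 0 - q := by
    intro q
    induction q with
    | zero => simp
    | succ q ih =>
      have := hg (by omega : q < q + 1)
      push_cast
      push_cast at ih
      omega
  constructor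
  · refine ⟨g 0, ?_⟩
    rintro x ⟨q, rfl⟩
    exact hg.antitone (Nat.zero_le q)
  · intro b
    refine ⟨g ((g 0 - b).toNat + 1), ⟨_, rfl⟩, ?_⟩
    have h1 := hdrop ((g 0 - b).toNat + 1)
    have h2 := Int.self_le_toNat (g 0 - b)
    push_cast at h1
    omega

variable {e : ℕ} {c : ℤ} {ρ : ℕ → ℕ} {θ : ℕ → ℕ}

lemma nuMap_mem_res (he : 1 < e) (hρ : IsPartitionFun ρ)
    (hcore : ∀ x ∈ betaSet c ρ, x - (e : ℤ) ∈ betaSet c ρ)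
    (ν : Fin e → ℕ → ℕ) (t : Fin e) (q : ℕ) :
    (((mthBeta e (betaSet c ρ) (resOf e θ t) q + (e:ℤ) * (ν t q : ℤ) : ℤ)) : ZMod e)
      = resOf e θ t := by
  haveI : NeZero e := ⟨by omega⟩
  have h1 := mthBeta_res he hρ hcore (resOf e θ t) q
  have h2 : (((mthBeta e (betaSet c ρ) (resOf e θ t) q + (e:ℤ) * (ν t q : ℤ) : ℤ)) : ZMod e)
      = ((mthBeta e (betaSet c ρ) (resOf e θ t) q : ℤ) : ZMod e) := by
    push_cast
    simp [ZMod.natCast_self]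
  rw [h2, h1]

lemma nuMap_resSet (he : 1 < e) (hρ : IsPartitionFun ρ)
    (hcore : ∀ x ∈ betaSet c ρ, x - (e : ℤ) ∈ betaSet c ρ)
    (hθ : Set.BijOn θ (Set.Icc 1 e) (Set.Iio e))
    (ν : Fin e → ℕ → ℕ) (t : Fin e) :
    resSet e (nuMap e c ρ θ ν) (resOf e θ t)
      = Set.range (fun q : ℕ =>
          mthBeta e (betaSet c ρ) (resOf e θ t) q + (e:ℤ) * (ν t q : ℤ)) := by
  ext x
  simp only [resSet, mem_setOf_eq, mem_range, nuMap]
  constructor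
  · rintro ⟨⟨s, q, rfl⟩, hres⟩
    have h1 : ((θ (e - (s:ℕ)) : ℕ) : ZMod e) = resOf e θ s := rfl
    rw [h1] at hres ⊢
    have h2 := nuMap_mem_res (θ := θ) he hρ hcore ν s q
    rw [h2] at hres
    obtain rfl := resOf_inj he hθ hres
    exact ⟨q, rfl⟩
  · rintro ⟨q, rfl⟩
    exact ⟨⟨t, q, rfl⟩, nuMap_mem_res he hρ hcore ν t q⟩

lemma nuMap_f_strictAnti (he : 1 < e) (hρ : IsPartitionFun ρ)
    (hcore : ∀ x ∈ betaSet c ρ, x - (e : ℤ) ∈ betaSet c ρ)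
    {ν : Fin e → ℕ → ℕ} (hν : ∀ t, IsPartitionFun (ν t)) (t : Fin e) :
    StrictAnti (fun q : ℕ =>
      mthBeta e (betaSet c ρ) (resOf e θ t) q + (e:ℤ) * (ν t q : ℤ)) := by
  apply strictAnti_nat_of_succ_lt
  intro q
  have h1 : ν t (q+1) ≤ ν t q := (hν t).1 (Nat.le_succ q)
  have h1' : ((ν t (q+1) : ℕ) : ℤ) ≤ ((ν t q : ℕ) : ℤ) := by exact_mod_cast h1
  have he1 : (1:ℤ) ≤ e := by exact_mod_cast (by omega : 1 ≤ e)
  rw [mthBeta_core he hρ hcore, mthBeta_core he hρ hcore]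
  push_cast
  nlinarith

lemma nuMap_enum (he : 1 < e) (hρ : IsPartitionFun ρ)
    (hcore : ∀ x ∈ betaSet c ρ, x - (e : ℤ) ∈ betaSet c ρ)
    (hθ : Set.BijOn θ (Set.Icc 1 e) (Set.Iio e))
    {ν : Fin e → ℕ → ℕ} (hν : ∀ t, IsPartitionFun (ν t)) (t : Fin e) (q : ℕ) :
    enum (resSet e (nuMap e c ρ θ ν) (resOf e θ t)) q
      = mthBeta e (betaSet c ρ) (resOf e θ t) q + (e:ℤ) * (ν t q : ℤ) := by
  rw [nuMap_resSet he hρ hcore hθ ν t]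
  exact (eq_enum_of_ncard (good_range_strictAnti (nuMap_f_strictAnti he hρ hcore hν t))
    ⟨q, rfl⟩ (ncard_range_above (nuMap_f_strictAnti he hρ hcore hν t) q)).symm

lemma nuMap_injective (he : 1 < e) (hρ : IsPartitionFun ρ)
    (hcore : ∀ x ∈ betaSet c ρ, x - (e : ℤ) ∈ betaSet c ρ)
    (hθ : Set.BijOn θ (Set.Icc 1 e) (Set.Iio e))
    {ν ν' : Fin e → ℕ → ℕ} (hν : ∀ t, IsPartitionFun (ν t))
    (hν' : ∀ t, IsPartitionFun (ν' t))
    (h : nuMap e c ρ θ ν = nuMap e c ρ θ ν') : ν = ν' := by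
  funext t q
  have h1 := nuMap_enum he hρ hcore hθ hν t q
  have h2 := nuMap_enum he hρ hcore hθ hν' t q
  rw [h] at h1
  rw [h1] at h2
  have hepos : (0:ℤ) < (e:ℤ) := by exact_mod_cast (by omega : 0 < e)
  have h3 : (e:ℤ) * (ν t q : ℤ) = (e:ℤ) * (ν' t q : ℤ) := by omega
  have h4 : ((ν t q : ℕ) : ℤ) = ((ν' t q : ℕ) : ℤ) :=
    mul_left_cancel₀ hepos.ne' h3
  exact_mod_cast h4

/-! ### Surjectivity -/

lemma ediv_succ_ind {e : ℕ} (he : 0 < e) (m : ℤ) :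
    (m + 1)/(e:ℤ) = m/(e:ℤ) + (if ((e:ℤ) ∣ (m+1)) then 1 else 0) := by
  have hepos : (0:ℤ) < (e:ℤ) := by exact_mod_cast he
  have h1 := Int.mul_ediv_add_emod m (e:ℤ)
  have h2 := Int.emod_nonneg m hepos.ne'
  have h3 := Int.emod_lt_of_pos m hepos
  rcases eq_or_lt_of_le (by omega : m % (e:ℤ) ≤ (e:ℤ) - 1) with heq | hlt
  · have h4 : (e:ℤ)*(m/(e:ℤ)+1) = (e:ℤ)*(m/(e:ℤ)) + e := by ring
    have hdvd : (e:ℤ) ∣ (m+1) := ⟨m/(e:ℤ) + 1, by omega⟩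
    rw [if_pos hdvd]
    have h5 : m + 1 = (e:ℤ) * (m/(e:ℤ) + 1) := by omega
    rw [h5, Int.mul_ediv_cancel_left _ hepos.ne']
  · have hndvd : ¬ (e:ℤ) ∣ (m+1) := by
      rintro ⟨s, hs⟩
      have h4 : (e:ℤ) * s - (e:ℤ) * (m/(e:ℤ)) = m % (e:ℤ) + 1 := by omega
      have h5 : (e:ℤ) ∣ (m % (e:ℤ) + 1) := ⟨s - m/(e:ℤ), by linarith [mul_sub (e:ℤ) s (m/(e:ℤ))]⟩
      obtain ⟨w, hw⟩ := h5
      have hw1 : 1 ≤ w := by nlinarith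
      nlinarith
    rw [if_neg hndvd]
    have : m + 1 = (e:ℤ) * (m/(e:ℤ)) + (m % (e:ℤ) + 1) := by omega
    rw [this, add_comm ((e:ℤ) * (m / (e:ℤ))) _, Int.add_mul_ediv_left _ _ hepos.ne',
      Int.ediv_eq_zero_of_lt (by omega) (by omega)]
    omega

lemma sub_ediv_ind {e : ℕ} (he : 0 < e) (x z : ℤ) :
    (x - (z-1))/(e:ℤ) - (x - z)/(e:ℤ)
      = (if ((x : ZMod e) = ((z - 1 : ℤ) : ZMod e)) then 1 else 0) := by
  have h1 : x - (z-1) = (x - z) + 1 := by ring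
  rw [h1, ediv_succ_ind he (x - z)]
  have h2 : ((x : ZMod e) = ((z - 1 : ℤ) : ZMod e)) ↔ ((e:ℤ) ∣ (x - z + 1)) := by
    rw [res_iff]
    constructor <;> (intro ⟨w, hw⟩; exact ⟨w, by omega⟩)
  rcases Classical.em ((e:ℤ) ∣ (x - z + 1)) with hd | hd
  · rw [if_pos hd, if_pos (h2.mpr hd)]
    ring
  · rw [if_neg hd, if_neg (fun hc => hd (h2.mp hc))]
    ring

lemma backward (he : 1 < e) (hρ : IsPartitionFun ρ)
    (hcore : ∀ x ∈ betaSet c ρ, x - (e : ℤ) ∈ betaSet c ρ)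
    (hθ : Set.BijOn θ (Set.Icc 1 e) (Set.Iio e))
    {lam : ℕ → ℕ} (hlam : IsPartitionFun lam) (hsub : diag c ρ ⊆ diag c lam) {d : ℕ}
    (hcont : ∀ z : ℤ, ((diag c lam \ diag c ρ) ∩
      {u : ℤ × ℤ | ((u.2 - u.1 : ℤ) : ZMod e) = (z : ZMod e)}).ncard = d) :
    ∃ ν : Fin e → ℕ → ℕ, (∀ t, IsPartitionFun (ν t)) ∧
      nuMap e c ρ θ ν = betaSet c lam := by
  haveI : NeZero e := ⟨by omega⟩
  have hepos : (0:ℤ) < (e:ℤ) := by exact_mod_cast (by omega : 0 < e)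
  have hdom := le_of_diag_subset hsub
  obtain ⟨N₀, hN₀⟩ := hρ.2
  obtain ⟨N₁, hN₁⟩ := hlam.2
  obtain ⟨M, hM⟩ : ∃ M : Fin e → ℤ, ∀ t, M t = Mmax e (betaSet c ρ) (resOf e θ t) :=
    ⟨_, fun _ => rfl⟩
  have hMres : ∀ t, ((M t : ℤ) : ZMod e) = resOf e θ t := by
    intro t
    have h1 := mthBeta_res (c := c) (ρ := ρ) he hρ hcore (resOf e θ t) 0
    rw [mthBeta_core he hρ hcore] at h1
    simpa [hM] using h1
  have hMkres : ∀ (t : Fin e) (k : ℕ),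
      (((M t - (e:ℤ)*(k:ℤ) : ℤ)) : ZMod e) = resOf e θ t := by
    intro t k
    have h2 : (((M t - (e:ℤ)*(k:ℤ) : ℤ)) : ZMod e) = ((M t : ℤ) : ZMod e) := by
      push_cast; simp [ZMod.natCast_self]
    rw [h2, hMres]
  have hrangeB : ∀ t, resSet e (betaSet c ρ) (resOf e θ t)
      = Set.range (fun k : ℕ => M t - (e:ℤ) * k) := by
    intro t
    rw [resSet_core_eq he hρ hcore, hM]
  obtain ⟨N, hNN₀, hNN₁, hNM⟩ : ∃ N : ℕ, N₀ ≤ N ∧ N₁ ≤ N ∧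
      ∀ t, c - (N:ℤ) - 1 < M t - 1 := by
    refine ⟨max (max N₀ N₁) (Finset.univ.sup (fun t => (c - M t + 1).toNat + 1)),
      by omega, by omega, ?_⟩
    intro t
    have h1 : (c - M t + 1).toNat + 1 ≤
        max (max N₀ N₁) (Finset.univ.sup (fun t => (c - M t + 1).toNat + 1)) :=
      le_trans (Finset.le_sup (f := fun t => (c - M t + 1).toNat + 1)
        (Finset.mem_univ t)) (le_max_right _ _)
    have h2 := Int.self_le_toNat (c - M t + 1)
    omega
  obtain ⟨L, hL⟩ : ∃ L : ℤ, L = c - (N:ℤ) - 1 := ⟨_, rfl⟩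
  have hLM : ∀ t, L < M t - 1 := fun t => hL ▸ hNM t
  have hρN : ∀ a, N ≤ a → ρ a = 0 := fun a ha => hN₀ a (by omega)
  have hlamN : ∀ a, N ≤ a → lam a = 0 := fun a ha => hN₁ a (by omega)
  have hlowB : ∀ x ≤ L, x ∈ betaSet c ρ := fun x hx => low_betaSet hN₀ x (by omega)
  have hlowT : ∀ x ≤ L, x ∈ betaSet c lam := fun x hx => low_betaSet hN₁ x (by omega)
  have hTgood : Good (betaSet c lam) := good_betaSet hlam
  have hTtgood : ∀ t, Good (resSet e (betaSet c lam) (resOf e θ t)) :=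
    fun t => good_resSet (c := c) he hTgood (low_betaSet hN₁) (resOf e θ t)
  obtain ⟨mT, hmT⟩ : ∃ mT : Fin e → ℕ → ℤ,
      ∀ t q, mT t q = enum (resSet e (betaSet c lam) (resOf e θ t)) q :=
    ⟨_, fun _ _ => rfl⟩
  have hmTmem : ∀ t q, mT t q ∈ resSet e (betaSet c lam) (resOf e θ t) := by
    intro t q; rw [hmT]; exact enum_mem (hTtgood t) q
  have hmTres : ∀ t q, ((mT t q : ℤ) : ZMod e) = resOf e θ t := fun t q => (hmTmem t q).2
  have hmTT : ∀ t q, mT t q ∈ betaSet c lam := fun t q => (hmTmem t q).1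
  have hstep : ∀ t q, mT t (q+1) ≤ mT t q - (e:ℤ) := by
    intro t q
    have h1 : mT t (q+1) < mT t q := by
      rw [hmT, hmT]; exact enum_succ_lt (hTtgood t) q
    have h2 : (e:ℤ) ∣ (mT t q - mT t (q+1)) := by
      rw [← res_iff, hmTres, hmTres]
    obtain ⟨k, hk⟩ := h2
    have hk1 : 1 ≤ k := by nlinarith
    nlinarith
  -- cutoffs for the B side
  obtain ⟨KB, hKB⟩ : ∃ KB : Fin e → ℕ, ∀ t, (KB t : ℤ) = (M t - L + (e:ℤ) - 1)/(e:ℤ) := by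
    refine ⟨fun t => ((M t - L + (e:ℤ) - 1)/(e:ℤ)).toNat, fun t => ?_⟩
    have h2 := hLM t
    refine Int.toNat_of_nonneg (Int.ediv_nonneg (by omega) hepos.le)
  have hKBdiv : ∀ t, (e:ℤ) * (KB t : ℤ) ≤ M t - L + (e:ℤ) - 1 ∧
      M t - L ≤ (e:ℤ) * (KB t : ℤ) := by
    intro t
    have h1 := Int.mul_ediv_add_emod (M t - L + (e:ℤ) - 1) (e:ℤ)
    have h2 := Int.emod_nonneg (M t - L + (e:ℤ) - 1) hepos.ne'
    have h3 := Int.emod_lt_of_pos (M t - L + (e:ℤ) - 1) hepos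
    rw [hKB t]
    omega
  have hKB1 : ∀ (t : Fin e) (k : ℕ), k < KB t → L < M t - (e:ℤ)*(k:ℤ) := by
    intro t k hk
    have h1 : (k:ℤ) ≤ (KB t : ℤ) - 1 := by omega
    have h2 := (hKBdiv t).1
    have h3 : (e:ℤ)*(k:ℤ) ≤ (e:ℤ)*((KB t : ℤ) - 1) := mul_le_mul_of_nonneg_left h1 hepos.le
    nlinarith
  have hKB2 : ∀ (t : Fin e) (k : ℕ), KB t ≤ k → M t - (e:ℤ)*(k:ℤ) ≤ L := by
    intro t k hk
    have h1 : (KB t : ℤ) ≤ (k:ℤ) := by exact_mod_cast hk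
    have h2 := (hKBdiv t).2
    have h3 : (e:ℤ)*(KB t : ℤ) ≤ (e:ℤ)*(k:ℤ) := mul_le_mul_of_nonneg_left h1 hepos.le
    omega
  have hKBgt : ∀ (t : Fin e) (k : ℕ), L < M t - (e:ℤ)*(k:ℤ) → k < KB t := by
    intro t k hk
    by_contra hc
    push_neg at hc
    exact absurd (hKB2 t k hc) (not_le.mpr hk)
  have hfmemB : ∀ (t : Fin e) (k : ℕ), M t - (e:ℤ)*(k:ℤ) ∈ betaSet c ρ := by
    intro t k
    have h5 : M t - (e:ℤ)*(k:ℤ) ∈ resSet e (betaSet c ρ) (resOf e θ t) := by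
      rw [hrangeB t]; exact ⟨k, rfl⟩
    exact h5.1
  have hmemB_rep : ∀ x ∈ betaSet c ρ, ∃ t : Fin e, ∃ k : ℕ, x = M t - (e:ℤ)*(k:ℤ) := by
    intro x hx
    obtain ⟨t, ht⟩ := resOf_surj he hθ ((x : ZMod e))
    have hxres : x ∈ resSet e (betaSet c ρ) (resOf e θ t) := ⟨hx, ht.symm⟩
    rw [hrangeB t] at hxres
    obtain ⟨k, hk⟩ := hxres
    exact ⟨t, k, hk.symm⟩
  -- the finsets of large beta numbers
  have hcoeFT : ↑((Finset.range N).image (fun a => bnum c lam a))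
      = betaSet c lam ∩ Ioi L := by
    rw [Finset.coe_image, Finset.coe_range]
    ext x
    simp only [mem_image, mem_Iio, mem_inter_iff, mem_Ioi]
    constructor
    · rintro ⟨a, ha, rfl⟩
      constructor
      · rw [betaSet_eq_range]; exact ⟨a, rfl⟩
      · have h1' : ((ρ a : ℕ):ℤ) ≤ ((lam a : ℕ):ℤ) := by exact_mod_cast hdom a
        have h2 : (a:ℤ) < (N:ℤ) := by exact_mod_cast ha
        have h3 : (0:ℤ) ≤ (ρ a : ℤ) := by positivity
        simp only [bnum]
        omega
    · rintro ⟨hx, hgt⟩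
      rw [betaSet_eq_range] at hx
      obtain ⟨a, rfl⟩ := hx
      refine ⟨a, ?_, rfl⟩
      by_contra hc
      push_neg at hc
      have h0 : lam a = 0 := hlamN a hc
      have h2 : (N:ℤ) ≤ (a:ℤ) := by exact_mod_cast hc
      simp only [bnum, h0] at hgt
      omega
  have hcoeFB : ↑((Finset.range N).image (fun a => bnum c ρ a))
      = betaSet c ρ ∩ Ioi L := by
    rw [Finset.coe_image, Finset.coe_range]
    ext x
    simp only [mem_image, mem_Iio, mem_inter_iff, mem_Ioi]
    constructor
    · rintro ⟨a, ha, rfl⟩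
      refine ⟨(betaSet_eq_range c ρ) ▸ ⟨a, rfl⟩, ?_⟩
      have h2 : (a:ℤ) < (N:ℤ) := by exact_mod_cast ha
      have h3 : (0:ℤ) ≤ (ρ a : ℤ) := by positivity
      simp only [bnum]
      omega
    · rintro ⟨hx, hgt⟩
      rw [betaSet_eq_range] at hx
      obtain ⟨a, rfl⟩ := hx
      refine ⟨a, ?_, rfl⟩
      by_contra hc
      push_neg at hc
      have h0 : ρ a = 0 := hρN a hc
      have h2 : (N:ℤ) ≤ (a:ℤ) := by exact_mod_cast hc
      simp only [bnum, h0] at hgt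
      omega
  have hinjbl : Set.InjOn (fun a => bnum c lam a) ↑(Finset.range N) :=
    fun a _ b _ h => (bnum_strictAnti hlam.1).injective h
  have hinjbρ : Set.InjOn (fun a => bnum c ρ a) ↑(Finset.range N) :=
    fun a _ b _ h => (bnum_strictAnti hρ.1).injective h
  -- the content identity in terms of beta numbers
  have hV : ∀ z : ℤ, ((d:ℕ):ℤ)
      = (∑ x ∈ (Finset.range N).image (fun a => bnum c lam a), (x - z)/(e:ℤ))
        - ∑ x ∈ (Finset.range N).image (fun a => bnum c ρ a), (x - z)/(e:ℤ) := by
    intro z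
    have h0 := hcont z
    rw [skew_res_ncard (e := e) hdom hlamN z] at h0
    have hcards : ∀ a ∈ Finset.range N,
        ((((Finset.Ioc (bnum c ρ a) (bnum c lam a)).filter
          (fun k : ℤ => ((k : ZMod e) = (z : ZMod e)))).card : ℕ) : ℤ)
          = (bnum c lam a - z)/(e:ℤ) - (bnum c ρ a - z)/(e:ℤ) := by
      intro a _
      apply card_res_Ioc_of_le (by omega : 0 < e)
      have h1' : ((ρ a : ℕ):ℤ) ≤ ((lam a : ℕ):ℤ) := by exact_mod_cast hdom a
      simp only [bnum]
      omega
    have e1 : ∑ x ∈ (Finset.range N).image (fun a => bnum c lam a), (x - z)/(e:ℤ)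
        = ∑ a ∈ Finset.range N, (bnum c lam a - z)/(e:ℤ) :=
      Finset.sum_image (fun a ha b hb h => hinjbl ha hb h)
    have e2 : ∑ x ∈ (Finset.range N).image (fun a => bnum c ρ a), (x - z)/(e:ℤ)
        = ∑ a ∈ Finset.range N, (bnum c ρ a - z)/(e:ℤ) :=
      Finset.sum_image (fun a ha b hb h => hinjbρ ha hb h)
    rw [e1, e2, ← Finset.sum_sub_distrib, ← Finset.sum_congr rfl hcards, ← Nat.cast_sum, h0]
  -- equality of residue counts above L
  have hfilters : ∀ z : ℤ,
      (((Finset.range N).image (fun a => bnum c lam a)).filter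
        (fun x : ℤ => ((x : ZMod e) = (z : ZMod e)))).card
      = (((Finset.range N).image (fun a => bnum c ρ a)).filter
        (fun x : ℤ => ((x : ZMod e) = (z : ZMod e)))).card := by
    intro z
    have h1 := hV z
    have h2 := hV (z + 1)
    have h3 : ∀ (s : Finset ℤ),
        (∑ x ∈ s, (x - z)/(e:ℤ)) - (∑ x ∈ s, (x - (z+1))/(e:ℤ))
          = ((s.filter (fun x : ℤ => ((x : ZMod e) = (z : ZMod e)))).card : ℤ) := by
      intro s
      rw [← Finset.sum_sub_distrib]
      have h4 : ∀ x ∈ s, (x - z)/(e:ℤ) - (x - (z+1))/(e:ℤ)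
          = (if ((x : ZMod e) = (z : ZMod e)) then (1:ℤ) else 0) := by
        intro x _
        have h5 := sub_ediv_ind (by omega : 0 < e) x (z + 1)
        have h6 : z + 1 - 1 = z := by ring
        rw [h6] at h5
        exact h5
      rw [Finset.sum_congr rfl h4, Finset.sum_boole]
    have h7 := h3 ((Finset.range N).image (fun a => bnum c lam a))
    have h8 := h3 ((Finset.range N).image (fun a => bnum c ρ a))
    omega
  have hMinj : ∀ t : Fin e, Function.Injective (fun k : ℕ => M t - (e:ℤ)*(k:ℤ)) :=
    fun t => (Msub_strictAnti (e := e) he (M t)).injective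
  have hcast_res : ∀ t : Fin e, ((((resOf e θ t).val : ℕ) : ℤ) : ZMod e) = resOf e θ t := by
    intro t
    push_cast
    simp [ZMod.natCast_val]
  have hFBfilter : ∀ t : Fin e,
      ((Finset.range N).image (fun a => bnum c ρ a)).filter
        (fun x : ℤ => ((x : ZMod e) = resOf e θ t))
      = (Finset.range (KB t)).image (fun k : ℕ => M t - (e:ℤ)*(k:ℤ)) := by
    intro t
    apply Finset.coe_injective
    rw [Finset.coe_filter]
    ext x
    simp only [mem_setOf_eq, Finset.mem_coe, Finset.coe_image, Finset.coe_range,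
      Finset.mem_image, Finset.mem_range]
    constructor
    · rintro ⟨hx, hres⟩
      have hx' : x ∈ betaSet c ρ ∩ Ioi L := by
        rw [← hcoeFB]; simpa using hx
      obtain ⟨t', k, rfl⟩ := hmemB_rep x hx'.1
      have ht' : resOf e θ t' = resOf e θ t := by rw [← hMkres t' k, hres]
      obtain rfl := resOf_inj he hθ ht'
      have hgt : L < M t' - (e:ℤ)*(k:ℤ) := hx'.2
      exact ⟨k, hKBgt t' k hgt, rfl⟩
    · rintro ⟨k, hk, rfl⟩
      refine ⟨?_, hMkres t k⟩
      have hx' : M t - (e:ℤ)*(k:ℤ) ∈ betaSet c ρ ∩ Ioi L := ⟨hfmemB t k, hKB1 t k hk⟩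
      rw [← hcoeFB] at hx'
      simpa using hx'
  have hTt_count : ∀ t : Fin e,
      (resSet e (betaSet c lam) (resOf e θ t) ∩ Ioi L).ncard = KB t := by
    intro t
    have hcoe : resSet e (betaSet c lam) (resOf e θ t) ∩ Ioi L
        = ↑(((Finset.range N).image (fun a => bnum c lam a)).filter
            (fun x : ℤ => ((x : ZMod e) = resOf e θ t))) := by
      rw [Finset.coe_filter]
      ext x
      simp only [resSet, mem_inter_iff, mem_setOf_eq, mem_Ioi, Finset.mem_coe]
      constructor
      · rintro ⟨⟨hxT, hxres⟩, hgt⟩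
        have hx' : x ∈ betaSet c lam ∩ Ioi L := ⟨hxT, hgt⟩
        rw [← hcoeFT] at hx'
        exact ⟨by exact_mod_cast hx', hxres⟩
      · rintro ⟨hx, hres⟩
        have hx' : x ∈ betaSet c lam ∩ Ioi L := by
          rw [← hcoeFT]; exact_mod_cast hx
        exact ⟨⟨hx'.1, hres⟩, hx'.2⟩
    rw [hcoe, Set.ncard_coe_finset]
    have h1 := hfilters (((resOf e θ t).val : ℕ) : ℤ)
    simp only [hcast_res t] at h1
    rw [h1, hFBfilter t, Finset.card_image_of_injective _ (hMinj t), Finset.card_range]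
  have hmT_event : ∀ (t : Fin e) (q : ℕ), KB t ≤ q → mT t q = M t - (e:ℤ)*(q:ℤ) := by
    intro t q hq
    rw [hmT]
    refine (eq_enum_of_ncard (hTtgood t) ⟨hlowT _ (hKB2 t q hq), hMkres t q⟩ ?_).symm
    have hsplit : resSet e (betaSet c lam) (resOf e θ t) ∩ Ioi (M t - (e:ℤ)*(q:ℤ))
        = (resSet e (betaSet c lam) (resOf e θ t) ∩ Ioi L)
          ∪ (fun k : ℕ => M t - (e:ℤ)*(k:ℤ)) '' (Ico (KB t) q) := by
      ext y
      simp only [mem_union, mem_inter_iff, mem_Ioi, mem_image, mem_Ico]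
      constructor
      · rintro ⟨hy, hgt⟩
        rcases lt_or_ge L y with h | h
        · exact Or.inl ⟨hy, h⟩
        · right
          have hdvd : (e:ℤ) ∣ (M t - y) := by
            rw [← res_iff, hMres t, hy.2]
          obtain ⟨k', hk'⟩ := hdvd
          have hkpos : 1 ≤ k' := by nlinarith [hLM t]
          have htn : ((k'.toNat : ℕ) : ℤ) = k' := Int.toNat_of_nonneg (by omega)
          have hyk : y = M t - (e:ℤ)*((k'.toNat : ℕ) : ℤ) := by rw [htn]; omega
          refine ⟨k'.toNat, ⟨?_, ?_⟩, hyk.symm⟩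
          · by_contra hc
            push_neg at hc
            have := hKB1 t k'.toNat hc
            rw [← hyk] at this
            omega
          · have h2 : (e:ℤ)*((k'.toNat : ℕ) : ℤ) < (e:ℤ)*(q:ℤ) := by omega
            have h3 : ((k'.toNat : ℕ) : ℤ) < (q:ℤ) := lt_of_mul_lt_mul_left h2 hepos.le
            exact_mod_cast h3
      · rintro (⟨hy, hgt⟩ | ⟨k, ⟨hk1, hk2⟩, rfl⟩)
        · refine ⟨hy, ?_⟩
          have := hKB2 t q hq
          omega
        · refine ⟨⟨hlowT _ (hKB2 t k hk1), hMkres t k⟩, ?_⟩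
          have h2 : ((k:ℕ) : ℤ) < (q:ℤ) := by exact_mod_cast hk2
          have h3 : (e:ℤ)*((k:ℕ):ℤ) < (e:ℤ)*(q:ℤ) :=
            mul_lt_mul_of_pos_left h2 hepos
          omega
    rw [hsplit]
    have hfin1 : (resSet e (betaSet c lam) (resOf e θ t) ∩ Ioi L).Finite :=
      finite_above (hTtgood t) L
    have hfin2 : ((fun k : ℕ => M t - (e:ℤ)*(k:ℤ)) '' (Ico (KB t) q)).Finite :=
      (Set.finite_Ico _ _).image _
    have hdisj : Disjoint (resSet e (betaSet c lam) (resOf e θ t) ∩ Ioi L)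
        ((fun k : ℕ => M t - (e:ℤ)*(k:ℤ)) '' (Ico (KB t) q)) := by
      rw [Set.disjoint_left]
      rintro y ⟨_, hgt⟩ ⟨k, ⟨hk1, _⟩, rfl⟩
      simp only [mem_Ioi] at hgt
      exact absurd (hKB2 t k hk1) (not_le.mpr hgt)
    rw [Set.ncard_union_eq hdisj hfin1 hfin2, hTt_count t,
      Set.ncard_image_of_injOn ((hMinj t).injOn),
      show Ico (KB t) q = ↑(Finset.Ico (KB t) q) by simp, Set.ncard_coe_finset,
      Nat.card_Ico]
    omega
  -- define the multipartition
  have hdvdmT : ∀ (t : Fin e) (q : ℕ), (e:ℤ) ∣ (mT t q - (M t - (e:ℤ)*(q:ℤ))) := by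
    intro t q
    rw [← res_iff, hmTres, hMkres]
  have hνZ_anti : ∀ (t : Fin e) (q : ℕ),
      mT t (q+1) - (M t - (e:ℤ)*(((q+1):ℕ):ℤ)) ≤ mT t q - (M t - (e:ℤ)*(q:ℤ)) := by
    intro t q
    have h1 := hstep t q
    push_cast
    push_cast at h1
    nlinarith
  have hνZ_mono : ∀ (t : Fin e) (q q' : ℕ), q ≤ q' →
      mT t q' - (M t - (e:ℤ)*(q':ℤ)) ≤ mT t q - (M t - (e:ℤ)*(q:ℤ)) := by
    intro t q q' h
    induction q', h using Nat.le_induction with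
    | base => exact le_refl _
    | succ n hn ih => exact le_trans (hνZ_anti t n) ih
  have hνZ_event : ∀ (t : Fin e) (q : ℕ), KB t ≤ q →
      mT t q - (M t - (e:ℤ)*(q:ℤ)) = 0 := by
    intro t q hq
    rw [hmT_event t q hq]
    ring
  have hνZ_nonneg : ∀ (t : Fin e) (q : ℕ), 0 ≤ mT t q - (M t - (e:ℤ)*(q:ℤ)) := by
    intro t q
    have h1 := hνZ_mono t q (max q (KB t)) (le_max_left _ _)
    rw [hνZ_event t _ (le_max_right _ _)] at h1
    omega
  obtain ⟨ν, hνdef⟩ : ∃ ν : Fin e → ℕ → ℕ,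
      ∀ t q, ν t q = ((mT t q - (M t - (e:ℤ)*(q:ℤ)))/(e:ℤ)).toNat :=
    ⟨_, fun _ _ => rfl⟩
  have hν_cast : ∀ (t : Fin e) (q : ℕ),
      (e:ℤ) * ((ν t q : ℕ) : ℤ) = mT t q - (M t - (e:ℤ)*(q:ℤ)) := by
    intro t q
    rw [hνdef, Int.toNat_of_nonneg (Int.ediv_nonneg (hνZ_nonneg t q) hepos.le)]
    exact Int.mul_ediv_cancel' (hdvdmT t q)
  refine ⟨ν, ?_, ?_⟩
  · intro t
    constructor
    · apply antitone_nat_of_succ_le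
      intro q
      rw [hνdef, hνdef]
      apply Int.toNat_le_toNat
      exact Int.ediv_le_ediv hepos (hνZ_anti t q)
    · refine ⟨KB t, fun q hq => ?_⟩
      rw [hνdef, hνZ_event t q hq]
      simp
  · ext y
    simp only [nuMap, mem_setOf_eq]
    constructor
    · rintro ⟨t, q, rfl⟩
      rw [show ((θ (e - (t:ℕ)) : ℕ) : ZMod e) = resOf e θ t from rfl,
        mthBeta_core he hρ hcore]
      have h9 := hν_cast t q
      have h10 : Mmax e (betaSet c ρ) (resOf e θ t) - (e:ℤ)*(q:ℤ)
          + (e:ℤ) * ((ν t q : ℕ) : ℤ) = mT t q := by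
        rw [← hM]; omega
      rw [h10]
      exact hmTT t q
    · intro hy
      obtain ⟨t, ht⟩ := resOf_surj he hθ ((y : ZMod e))
      have h2 : y ∈ resSet e (betaSet c lam) (resOf e θ t) := ⟨hy, ht.symm⟩
      obtain ⟨q, hq⟩ := mem_range_enum (hTtgood t) h2
      refine ⟨t, q, ?_⟩
      rw [show ((θ (e - (t:ℕ)) : ℕ) : ZMod e) = resOf e θ t from rfl,
        mthBeta_core he hρ hcore]
      have h9 := hν_cast t q
      have h11 : y = mT t q := by rw [hq, hmT]
      have h12 := hM t
      omega

end S19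








open S19 in
/-- For a `(κ,θ)`-RoCK `e`-core `ρ` and `d ≤ cap^θ_δ(ρ,κ)`, the map `ν ↦ ν^θ_ρ` is a
bijection from `e`-tuples of partitions of total size `d` onto the skew diagrams
`λ/ρ` with `λ ⊇ ρ` a partition of charge `κ` and `cont(λ∖ρ) = dδ`. In particular the
number of such `λ` equals the number of `e`-multipartitions of `d`. -/
theorem statement19 (e : ℕ) (he : 1 < e) (c : ℤ) (ρ : ℕ → ℕ)
    (hρ : IsPartitionFun ρ)
    (θ : ℕ → ℕ) (hθ : Set.BijOn θ (Set.Icc 1 e) (Set.Iio e))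
    (hcore : ∀ x ∈ betaSet c ρ, x - (e : ℤ) ∈ betaSet c ρ)
    (hrock : ∀ (x y : ℤ) (a b : ℕ), a ∈ Set.Icc 1 e → b ∈ Set.Icc 1 e →
      y ∈ betaSet c ρ → x ∉ betaSet c ρ → x < y →
      (x : ZMod e) = (θ a : ZMod e) → (y : ZMod e) = (θ b : ZMod e) → a ≤ b)
    (d : ℕ) (hd : 0 < d) (hcap : (d : ℤ) ≤ capTheta e (betaSet c ρ) θ) :
    Set.BijOn (nuMap e c ρ θ)
      {ν : Fin e → ℕ → ℕ | (∀ t, IsPartitionFun (ν t)) ∧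
        (∑ t : Fin e, ∑ᶠ q : ℕ, ν t q) = d}
      {B : Set ℤ | ∃ lam : ℕ → ℕ, IsPartitionFun lam ∧ diag c ρ ⊆ diag c lam ∧
        (∀ i : ZMod e,
          ((diag c lam \ diag c ρ) ∩
            {u : ℤ × ℤ | ((u.2 - u.1 : ℤ) : ZMod e) = i}).ncard = d) ∧
        B = betaSet c lam} ∧
    {lam : ℕ → ℕ | IsPartitionFun lam ∧ diag c ρ ⊆ diag c lam ∧
        (∀ i : ZMod e,
          ((diag c lam \ diag c ρ) ∩
            {u : ℤ × ℤ | ((u.2 - u.1 : ℤ) : ZMod e) = i}).ncard = d)}.ncard =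
      {ν : Fin e → ℕ → ℕ | (∀ t, IsPartitionFun (ν t)) ∧
        (∑ t : Fin e, ∑ᶠ q : ℕ, ν t q) = d}.ncard := by
  haveI : NeZero e := ⟨by omega⟩
  have hzi : ∀ i : ZMod e, ∃ z : ℤ, (z : ZMod e) = i := by
    intro i
    refine ⟨((i.val : ℕ) : ℤ), ?_⟩
    push_cast
    simp [ZMod.natCast_val]
  have hbij : Set.BijOn (nuMap e c ρ θ)
      {ν : Fin e → ℕ → ℕ | (∀ t, IsPartitionFun (ν t)) ∧
        (∑ t : Fin e, ∑ᶠ q : ℕ, ν t q) = d}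
      {B : Set ℤ | ∃ lam : ℕ → ℕ, IsPartitionFun lam ∧ diag c ρ ⊆ diag c lam ∧
        (∀ i : ZMod e,
          ((diag c lam \ diag c ρ) ∩
            {u : ℤ × ℤ | ((u.2 - u.1 : ℤ) : ZMod e) = i}).ncard = d) ∧
        B = betaSet c lam} := by
    refine ⟨?_, ?_, ?_⟩
    · -- MapsTo
      rintro ν ⟨hν1, hν2⟩
      obtain ⟨lam, hlam, hβ, hdom, hcontent⟩ := forward he hρ hcore hθ ν hν1
      refine ⟨lam, hlam, diag_mono hdom, ?_, hβ.symm⟩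
      intro i
      obtain ⟨z, hz⟩ := hzi i
      rw [← hz]
      rw [hcontent z]
      exact hν2
    · -- InjOn
      rintro ν ⟨hν1, _⟩ ν' ⟨hν'1, _⟩ h
      exact nuMap_injective he hρ hcore hθ hν1 hν'1 h
    · -- SurjOn
      rintro B ⟨lam, hlam, hsub, hcont, rfl⟩
      have hcont' : ∀ z : ℤ, ((diag c lam \ diag c ρ) ∩
          {u : ℤ × ℤ | ((u.2 - u.1 : ℤ) : ZMod e) = ((z : ℤ) : ZMod e)}).ncard = d :=
        fun z => hcont ((z : ℤ) : ZMod e)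
      obtain ⟨ν, hν1, hνmap⟩ := backward he hρ hcore hθ hlam hsub hcont'
      have hsum : (∑ t : Fin e, ∑ᶠ q : ℕ, ν t q) = d := by
        obtain ⟨lam', hlam', hβ', hdom', hcontent'⟩ := forward he hρ hcore hθ ν hν1
        have heq : lam' = lam := by
          apply betaSet_inj (c := c) hlam' hlam
          rw [hβ', hνmap]
        rw [heq] at hcontent'
        rw [← hcontent' 0, hcont' 0]
      exact ⟨ν, ⟨hν1, hsum⟩, hνmap⟩
  refine ⟨hbij, ?_⟩
  have h1 : {B : Set ℤ | ∃ lam : ℕ → ℕ, IsPartitionFun lam ∧ diag c ρ ⊆ diag c lam ∧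
        (∀ i : ZMod e,
          ((diag c lam \ diag c ρ) ∩
            {u : ℤ × ℤ | ((u.2 - u.1 : ℤ) : ZMod e) = i}).ncard = d) ∧
        B = betaSet c lam}
      = (fun lam => betaSet c lam) '' {lam : ℕ → ℕ | IsPartitionFun lam ∧
          diag c ρ ⊆ diag c lam ∧
          (∀ i : ZMod e,
            ((diag c lam \ diag c ρ) ∩
              {u : ℤ × ℤ | ((u.2 - u.1 : ℤ) : ZMod e) = i}).ncard = d)} := by
    ext B
    simp only [Set.mem_setOf_eq, Set.mem_image]
    constructor
    · rintro ⟨lam, h1, h2, h3, rfl⟩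
      exact ⟨lam, ⟨h1, h2, h3⟩, rfl⟩
    · rintro ⟨lam, ⟨h1, h2, h3⟩, rfl⟩
      exact ⟨lam, h1, h2, h3, rfl⟩
  have h2 : Set.InjOn (fun lam => betaSet c lam) {lam : ℕ → ℕ | IsPartitionFun lam ∧
      diag c ρ ⊆ diag c lam ∧
      (∀ i : ZMod e,
        ((diag c lam \ diag c ρ) ∩
          {u : ℤ × ℤ | ((u.2 - u.1 : ℤ) : ZMod e) = i}).ncard = d)} :=
    fun p hp q hq h => betaSet_inj hp.1 hq.1 h
  have h3 := Set.ncard_image_of_injOn h2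
  have h4 := Set.ncard_image_of_injOn hbij.injOn
  rw [hbij.image_eq] at h4
  have h5 := congrArg Set.ncard h1
  exact (h3.symm.trans h5.symm).trans h4
end
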